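/- arXiv:2402.05539 — 2 statements merged into one kernel-verified Lean document; each statement's English description precedes it below -/
import Mathlib

section
/- The center of the cyclotomic Drinfeld–Kohno Lie algebra 𝔱_2^Γ is a one-dimensional vector space generated by c := t_{01} + t_{02} + Σ_{α ∈ Γ} t_{12}^α; that is, the center of 𝔱_2^Γ equals the k-linear span of c. -/
/-! The cyclotomic Drinfeld–Kohno Lie algebras `𝔱_n^Γ` for `Γ = ℤ/Nℤ` (Definition 3.22).
The non-frozen strands `1, …, n` are indexed by `Fin n` (strand `i` corresponds to
`(i - 1 : Fin n)`), and `0` denotes the frozen strand. -/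

open FreeLieAlgebra

variable (k : Type) [Field k] [CharZero k] (N : ℕ) [NeZero N]

/-- Generators of `𝔱_n^Γ`: the `t_{0i}` for `1 ≤ i ≤ n` and the `t_{ij}^α` for
`1 ≤ i, j ≤ n`, `i ≠ j`, `α ∈ Γ = ℤ/Nℤ`. -/
def CGen (n : ℕ) : Type :=
  Fin n ⊕ ({p : Fin n × Fin n // p.1 ≠ p.2} × ZMod N)

/-- The generator `t_{0i}` in the free Lie algebra. -/
noncomputable def cT0 (n : ℕ) (i : Fin n) : FreeLieAlgebra k (CGen N n) :=
  FreeLieAlgebra.of k (Sum.inl i : CGen N n)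

/-- The generator `t_{ij}^α` in the free Lie algebra (junk value `0` if `i = j`). -/
noncomputable def cT (n : ℕ) (i j : Fin n) (α : ZMod N) : FreeLieAlgebra k (CGen N n) :=
  if h : i ≠ j then FreeLieAlgebra.of k (Sum.inr (⟨(i, j), h⟩, α) : CGen N n) else 0

/-- The set of defining relations of the cyclotomic Drinfeld–Kohno Lie algebra
(Definition 3.22). -/
def CRels (n : ℕ) : Set (FreeLieAlgebra k (CGen N n)) :=
  -- (a) t_{ij}^α = t_{ji}^{−α}
  {x | ∃ (i j : Fin n) (α : ZMod N), i ≠ j ∧ x = cT k N n i j α - cT k N n j i (-α)} ∪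
  -- (b) [t_{0i}, t_{jk}^α] = 0
  {x | ∃ (i j l : Fin n) (α : ZMod N), i ≠ j ∧ i ≠ l ∧ j ≠ l ∧
      x = ⁅cT0 k N n i, cT k N n j l α⁆} ∪
  -- (b') [t_{ij}^α, t_{kl}^β] = 0
  {x | ∃ (i j l m : Fin n) (α β : ZMod N),
      i ≠ j ∧ i ≠ l ∧ i ≠ m ∧ j ≠ l ∧ j ≠ m ∧ l ≠ m ∧
      x = ⁅cT k N n i j α, cT k N n l m β⁆} ∪
  -- (c) [t_{ij}^α, t_{ik}^{α+β} + t_{jk}^β] = 0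
  {x | ∃ (i j l : Fin n) (α β : ZMod N), i ≠ j ∧ i ≠ l ∧ j ≠ l ∧
      x = ⁅cT k N n i j α, cT k N n i l (α + β) + cT k N n j l β⁆} ∪
  -- (d) [t_{0i}, t_{0j} + Σ_α t_{ij}^α] = 0
  {x | ∃ i j : Fin n, i ≠ j ∧
      x = ⁅cT0 k N n i, cT0 k N n j + ∑ α : ZMod N, cT k N n i j α⁆} ∪
  -- (e) [t_{0i} + t_{0j} + Σ_β t_{ij}^β, t_{ij}^α] = 0
  {x | ∃ (i j : Fin n) (α : ZMod N), i ≠ j ∧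
      x = ⁅cT0 k N n i + cT0 k N n j + ∑ β : ZMod N, cT k N n i j β, cT k N n i j α⁆}

/-- The Lie ideal generated by the cyclotomic Drinfeld–Kohno relations. -/
noncomputable def CIdeal (n : ℕ) : LieIdeal k (FreeLieAlgebra k (CGen N n)) :=
  LieSubmodule.lieSpan k (FreeLieAlgebra k (CGen N n)) (CRels k N n)

/-- The cyclotomic Drinfeld–Kohno Lie algebra `𝔱_n^Γ`. -/
noncomputable def Cyc (n : ℕ) : Type :=
  FreeLieAlgebra k (CGen N n) ⧸ CIdeal k N n

noncomputable instance (n : ℕ) : LieRing (Cyc k N n) :=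
  inferInstanceAs (LieRing (FreeLieAlgebra k (CGen N n) ⧸ CIdeal k N n))

noncomputable instance (n : ℕ) : LieAlgebra k (Cyc k N n) :=
  inferInstanceAs (LieAlgebra k (FreeLieAlgebra k (CGen N n) ⧸ CIdeal k N n))

/-- The generator `t_{0i}` of `𝔱_n^Γ`. -/
noncomputable def CT0 (n : ℕ) (i : Fin n) : Cyc k N n :=
  LieSubmodule.Quotient.mk' (CIdeal k N n) (cT0 k N n i)

/-- The generator `t_{ij}^α` of `𝔱_n^Γ`. -/
noncomputable def CT (n : ℕ) (i j : Fin n) (α : ZMod N) : Cyc k N n :=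
  LieSubmodule.Quotient.mk' (CIdeal k N n) (cT k N n i j α)



section ProdLie

variable {L M : Type*} [LieRing L] [LieRing M]

instance prodLieRing : LieRing (L × M) where
  bracket x y := (⁅x.1, y.1⁆, ⁅x.2, y.2⁆)
  add_lie x y z := Prod.ext (add_lie x.1 y.1 z.1) (add_lie x.2 y.2 z.2)
  lie_add x y z := Prod.ext (lie_add x.1 y.1 z.1) (lie_add x.2 y.2 z.2)
  lie_self x := Prod.ext (lie_self x.1) (lie_self x.2)
  leibniz_lie x y z := Prod.ext (leibniz_lie x.1 y.1 z.1) (leibniz_lie x.2 y.2 z.2)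

@[simp] lemma prod_lie_def (x y : L × M) : ⁅x, y⁆ = (⁅x.1, y.1⁆, ⁅x.2, y.2⁆) := rfl

variable {R : Type*} [CommRing R] [LieAlgebra R L] [LieAlgebra R M]

instance prodLieAlgebra : LieAlgebra R (L × M) where
  lie_smul t x y := Prod.ext (lie_smul t x.1 y.1) (lie_smul t x.2 y.2)

end ProdLie

lemma sum_lie' {L : Type*} [LieRing L] {ι : Type*} (s : Finset ι) (f : ι → L) (y : L) :
    ⁅∑ i ∈ s, f i, y⁆ = ∑ i ∈ s, ⁅f i, y⁆ := by
  induction s using Finset.cons_induction with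
  | empty => simp
  | cons a s ha ih => rw [Finset.sum_cons, Finset.sum_cons, add_lie, ih]

lemma lie_sum' {L : Type*} [LieRing L] {ι : Type*} (s : Finset ι) (f : ι → L) (y : L) :
    ⁅y, ∑ i ∈ s, f i⁆ = ∑ i ∈ s, ⁅y, f i⁆ := by
  induction s using Finset.cons_induction with
  | empty => simp
  | cons a s ha ih => rw [Finset.sum_cons, Finset.sum_cons, lie_add, ih]

attribute [local instance] LieRing.ofAssociativeRing

section FreeLie

variable (K : Type*) [Field K] [CharZero K] (X : Type*)

/-- Generic fact: a Lie subalgebra of the free Lie algebra containing all generators is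
everything. -/
lemma freeLie_mem_subalgebra (S : LieSubalgebra K (FreeLieAlgebra K X))
    (h : ∀ x, of K x ∈ S) (z : FreeLieAlgebra K X) : z ∈ S := by
  have key : S.incl.comp (FreeLieAlgebra.lift K fun x => (⟨of K x, h x⟩ : S)) = LieHom.id := by
    apply FreeLieAlgebra.hom_ext
    intro x
    rw [LieHom.comp_apply, FreeLieAlgebra.lift_of_apply]
    rfl
  have : S.incl ((FreeLieAlgebra.lift K fun x => (⟨of K x, h x⟩ : S)) z) = z := by
    rw [← LieHom.comp_apply, key]; rfl
  rw [← this]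
  exact ((FreeLieAlgebra.lift K fun x => (⟨of K x, h x⟩ : S)) z).2

/-- The canonical Lie algebra morphism to the monoid algebra of the free monoid. -/
noncomputable def iotaB : FreeLieAlgebra K X →ₗ⁅K⁆ MonoidAlgebra K (FreeMonoid X) :=
  FreeLieAlgebra.lift K fun x => MonoidAlgebra.of K (FreeMonoid X) (FreeMonoid.of x)

@[simp] lemma iotaB_of (x : X) :
    iotaB K X (of K x) = MonoidAlgebra.single (FreeMonoid.of x) 1 := by
  simp [iotaB, MonoidAlgebra.of_apply]

/-- The adjoint action of generators, as an algebra morphism from the monoid algebra. -/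
noncomputable def rhoB : MonoidAlgebra K (FreeMonoid X) →ₐ[K] Module.End K (FreeLieAlgebra K X) :=
  MonoidAlgebra.lift K _ (FreeMonoid X)
    (FreeMonoid.lift fun x => (LieAlgebra.ad K (FreeLieAlgebra K X) (of K x) : Module.End K _))

lemma rhoB_iotaB (u : FreeLieAlgebra K X) :
    rhoB K X (iotaB K X u) = LieAlgebra.ad K (FreeLieAlgebra K X) u := by
  have : (rhoB K X).toLieHom.comp (iotaB K X) = LieAlgebra.ad K (FreeLieAlgebra K X) := by
    apply FreeLieAlgebra.hom_ext
    intro x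
    simp [rhoB, iotaB, MonoidAlgebra.of_apply, MonoidAlgebra.lift_single]
  exact LieHom.congr_fun this u

end FreeLie

set_option linter.unusedSectionVars false

section FreeLie2

variable (K : Type*) [Field K] [CharZero K] (X : Type*)

/-- Right-normed bracketing of a word. -/
noncomputable def theta0 : List X → FreeLieAlgebra K X
  | [] => 0
  | [a] => of K a
  | a :: b :: l => ⁅of K a, theta0 (b :: l)⁆

@[simp] lemma theta0_nil : theta0 K X ([] : List X) = 0 := rfl
@[simp] lemma theta0_singleton (a : X) : theta0 K X [a] = of K a := rfl

lemma theta0_cons (a : X) {l : List X} (h : l ≠ []) :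
    theta0 K X (a :: l) = ⁅of K a, theta0 K X l⁆ := by
  cases l with
  | nil => exact absurd rfl h
  | cons b t => rfl

/-- Linear extension of `theta0` to the monoid algebra. -/
noncomputable def thetaB : MonoidAlgebra K (FreeMonoid X) →ₗ[K] FreeLieAlgebra K X :=
  (Finsupp.lsum K fun l => LinearMap.toSpanSingleton K _ (theta0 K X (FreeMonoid.toList l))) ∘ₗ
    (MonoidAlgebra.coeffLinearEquiv K).toLinearMap

@[simp] lemma thetaB_single (l : FreeMonoid X) (c : K) :
    thetaB K X (MonoidAlgebra.single l c) = c • theta0 K X (FreeMonoid.toList l) := by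
  rw [thetaB, LinearMap.comp_apply]
  erw [Finsupp.lsum_single]
  rw [LinearMap.toSpanSingleton_apply]

lemma theta0_append (l l' : List X) (h : l' ≠ []) :
    theta0 K X (l ++ l') =
      (l.map fun x => (LieAlgebra.ad K (FreeLieAlgebra K X) (of K x) : Module.End K _)).prod
        (theta0 K X l') := by
  induction l with
  | nil => simp
  | cons a t ih =>
      have ht : t ++ l' ≠ [] := by
        intro hc
        rcases List.append_eq_nil_iff.mp hc with ⟨-, h2⟩
        exact h h2
      rw [List.cons_append, theta0_cons K X a ht, List.map_cons, List.prod_cons, ih]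
      simp [LieAlgebra.ad_apply]

lemma freeMonoid_lift_eq_prod {M : Type*} [Monoid M] (f : X → M) (l : FreeMonoid X) :
    FreeMonoid.lift f l = ((FreeMonoid.toList l).map f).prod := by
  induction l using FreeMonoid.recOn with
  | one => simp
  | of_mul a t ih => rw [map_mul, ih, FreeMonoid.toList_of_mul, List.map_cons, List.prod_cons,
      FreeMonoid.lift_eval_of]

lemma rhoB_single_word (l : FreeMonoid X) (c : K) :
    rhoB K X (MonoidAlgebra.single l c) =
      c • ((FreeMonoid.toList l).map fun x =>
        (LieAlgebra.ad K (FreeLieAlgebra K X) (of K x) : Module.End K _)).prod := by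
  rw [rhoB, MonoidAlgebra.lift_single]
  congr 1
  exact freeMonoid_lift_eq_prod X _ l

/-- The submodule of the monoid algebra supported away from the empty word. -/
noncomputable def augB : Submodule K (MonoidAlgebra K (FreeMonoid X)) :=
  MonoidAlgebra.supported K K {l : FreeMonoid X | l ≠ 1}

lemma theta_mul (a b : MonoidAlgebra K (FreeMonoid X)) (hb : b ∈ augB K X) :
    thetaB K X (a * b) = rhoB K X a (thetaB K X b) := by
  have hspan : b ∈ Submodule.span K ((fun l => MonoidAlgebra.single l (1 : K)) ''
      {l : FreeMonoid X | l ≠ 1}) := by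
    rwa [← MonoidAlgebra.supported_eq_span_single]
  clear hb
  revert a
  induction hspan using Submodule.span_induction with
  | mem p hp =>
      intro a
      obtain ⟨l, hl, rfl⟩ := hp
      induction a using MonoidAlgebra.induction_linear with
      | zero => simp
      | add f g hf hg => simp [add_mul, map_add, hf, hg]
      | single m c =>
          have hml : FreeMonoid.toList l ≠ [] := by
            intro hc
            exact hl (FreeMonoid.toList.injective (by rw [hc, FreeMonoid.toList_one]))
          rw [MonoidAlgebra.single_mul_single]
          rw [thetaB_single, thetaB_single, rhoB_single_word K X m]
          have h2 : FreeMonoid.toList (m * l) = FreeMonoid.toList m ++ FreeMonoid.toList l := rfl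
          rw [h2, theta0_append K X _ _ hml, LinearMap.smul_apply, LinearMap.map_smul]
          rw [mul_one, one_smul]
  | zero => intro a; simp
  | add p q _ _ hp hq =>
      intro a
      rw [mul_add, map_add, map_add, map_add, hp a, hq a]
  | smul c p _ hp =>
      intro a
      rw [mul_smul_comm, map_smul, map_smul, map_smul, hp a]

end FreeLie2

section FreeLie3

variable (K : Type*) [Field K] [CharZero K] (X : Type*)

lemma augB_mul_mem {a b : MonoidAlgebra K (FreeMonoid X)}
    (hb : b ∈ augB K X) : a * b ∈ augB K X := by
  classical
  rw [augB, MonoidAlgebra.mem_supported] at hb ⊢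
  refine subset_trans (Finset.coe_subset.mpr (MonoidAlgebra.support_coeff_mul_subset a b)) ?_
  intro l hl
  rw [Finset.mem_coe] at hl
  obtain ⟨u, hu, v, hv, rfl⟩ := Finset.mem_mul.mp hl
  have hv1 : v ≠ 1 := hb hv
  intro hc
  apply hv1
  have : FreeMonoid.toList u ++ FreeMonoid.toList v = [] := by
    rw [← FreeMonoid.toList_mul, hc, FreeMonoid.toList_one]
  exact FreeMonoid.toList.injective (List.append_eq_nil_iff.mp this).2

lemma iotaB_mem_augB (u : FreeLieAlgebra K X) : iotaB K X u ∈ augB K X := by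
  classical
  let S : LieSubalgebra K (FreeLieAlgebra K X) :=
    { carrier := {u | iotaB K X u ∈ augB K X}
      add_mem' := fun {a b} ha hb => by
        show iotaB K X (a + b) ∈ augB K X
        rw [map_add]
        exact (augB K X).add_mem ha hb
      zero_mem' := by
        show iotaB K X 0 ∈ augB K X
        rw [map_zero]
        exact (augB K X).zero_mem
      smul_mem' := fun c u hu => by
        show iotaB K X (c • u) ∈ augB K X
        rw [map_smul]
        exact (augB K X).smul_mem c hu
      lie_mem' := fun {u v} hu hv => by
        simp only [Set.mem_setOf_eq] at *
        rw [LieHom.map_lie, Ring.lie_def]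
        refine (augB K X).sub_mem (augB_mul_mem K X hv) (augB_mul_mem K X hu) }
  have : ∀ x : X, of K x ∈ S := by
    intro x
    show iotaB K X (of K x) ∈ augB K X
    rw [iotaB_of]
    rw [augB, MonoidAlgebra.mem_supported]
    refine subset_trans (Finset.coe_subset.mpr Finsupp.support_single_subset) ?_
    intro l hl
    simp only [Finset.coe_singleton, Finset.mem_coe, Finset.mem_singleton] at hl
    subst hl
    intro hc
    have : ([x] : List X) = [] := congrArg FreeMonoid.toList hc
    simp at this
  exact freeLie_mem_subalgebra K X S this u

/-- Lie monomials of a given degree. -/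
inductive IsMono : ℕ → FreeLieAlgebra K X → Prop
  | of (x : X) : IsMono 1 (of K x)
  | br {m n : ℕ} {u v : FreeLieAlgebra K X} :
      IsMono m u → IsMono n v → IsMono (m + n) ⁅u, v⁆

lemma IsMono.pos {n : ℕ} {u : FreeLieAlgebra K X} (h : IsMono K X n u) : 0 < n := by
  induction h with
  | of => exact Nat.one_pos
  | br h1 h2 ih1 ih2 => omega

/-- The Dynkin–Specht–Wever identity on Lie monomials. -/
lemma theta_iota_mono {n : ℕ} {u : FreeLieAlgebra K X} (h : IsMono K X n u) :
    thetaB K X (iotaB K X u) = (n : K) • u := by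
  induction h with
  | of x =>
      rw [iotaB_of, thetaB_single]
      show (1:K) • theta0 K X [x] = _
      simp
  | br hu hv ihu ihv =>
      rename_i m n u v
      rw [LieHom.map_lie, Ring.lie_def, map_sub,
        theta_mul K X _ _ (iotaB_mem_augB K X v), theta_mul K X _ _ (iotaB_mem_augB K X u),
        rhoB_iotaB, rhoB_iotaB, ihu, ihv, LieAlgebra.ad_apply, LieAlgebra.ad_apply]
      have hvu : ⁅v, (m : K) • u⁆ = -((m : K) • ⁅u, v⁆) := by
        rw [lie_smul (m : K) v u, ← lie_skew u v, smul_neg, neg_neg]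
      rw [lie_smul (n : K) u v, hvu, Nat.cast_add, add_smul]
      abel

/-- Submodule of homogeneous degree-`n` components. -/
noncomputable def homog (n : ℕ) : Submodule K (FreeLieAlgebra K X) :=
  Submodule.span K {u | IsMono K X n u}

lemma homog_zero_eq_bot : homog K X 0 = ⊥ := by
  rw [homog]
  convert Submodule.span_empty
  ext u
  simp only [Set.mem_setOf_eq, Set.mem_empty_iff_false, iff_false]
  intro h
  exact absurd (h.pos) (lt_irrefl 0)

lemma homog_lie_mem {m n : ℕ} {a b : FreeLieAlgebra K X}
    (ha : a ∈ homog K X m) (hb : b ∈ homog K X n) : ⁅a, b⁆ ∈ homog K X (m + n) := by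
  rw [homog] at ha hb ⊢
  induction ha using Submodule.span_induction with
  | mem p hp =>
      induction hb using Submodule.span_induction with
      | mem q hq => exact Submodule.subset_span (IsMono.br hp hq)
      | zero => simp
      | add q r _ _ hq hr => rw [lie_add]; exact Submodule.add_mem _ hq hr
      | smul c q _ hq => rw [lie_smul c p q]; exact Submodule.smul_mem _ c hq
  | zero => simp
  | add p q _ _ hp hq => rw [add_lie]; exact Submodule.add_mem _ hp hq
  | smul c p _ hp => rw [smul_lie]; exact Submodule.smul_mem _ c hp

lemma theta_iota_homog {n : ℕ} {u : FreeLieAlgebra K X} (h : u ∈ homog K X n) :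
    thetaB K X (iotaB K X u) = (n : K) • u := by
  induction h using Submodule.span_induction with
  | mem p hp => exact theta_iota_mono K X hp
  | zero => simp
  | add p q _ _ hp hq =>
      rw [map_add, map_add, hp, hq, smul_add]
  | smul c p _ hp =>
      rw [map_smul, map_smul, hp, smul_comm]

lemma mem_iSup_homog (z : FreeLieAlgebra K X) : z ∈ ⨆ n, homog K X n := by
  let S : LieSubalgebra K (FreeLieAlgebra K X) :=
    { carrier := {u | u ∈ ⨆ n, homog K X n}
      add_mem' := fun ha hb => (⨆ n, homog K X n).add_mem ha hb
      zero_mem' := (⨆ n, homog K X n).zero_mem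
      smul_mem' := fun c u hu => (⨆ n, homog K X n).smul_mem c hu
      lie_mem' := fun {u v} hu hv => by
        simp only [Set.mem_setOf_eq] at *
        rw [Submodule.mem_iSup_iff_exists_finsupp] at hu hv
        obtain ⟨f, hf, rfl⟩ := hu
        obtain ⟨g, hg, rfl⟩ := hv
        rw [Finsupp.sum, Finsupp.sum]
        have hexp : ⁅∑ a ∈ f.support, f a, ∑ a ∈ g.support, g a⁆ =
            ∑ i ∈ f.support, ∑ j ∈ g.support, ⁅f i, g j⁆ := by
          rw [sum_lie']
          exact Finset.sum_congr rfl fun i _ => lie_sum' _ _ _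
        rw [hexp]
        refine Submodule.sum_mem _ fun i hi => Submodule.sum_mem _ fun j hj => ?_
        exact Submodule.mem_iSup_of_mem (i + j) (homog_lie_mem K X (hf i) (hg j)) }
  refine freeLie_mem_subalgebra K X S (fun x => ?_) z
  show of K x ∈ ⨆ n, homog K X n
  exact Submodule.mem_iSup_of_mem 1 (Submodule.subset_span (IsMono.of x))

end FreeLie3

section FreeLie4

variable (K : Type*) [Field K] [CharZero K] (X : Type*)

lemma coeff_zero_of_comm {b : MonoidAlgebra K (FreeMonoid X)} {x : X}
    (hcomm : MonoidAlgebra.single (FreeMonoid.of x) (1 : K) * b =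
      b * MonoidAlgebra.single (FreeMonoid.of x) (1 : K))
    {l : FreeMonoid X} (hl : l ≠ 1) (hhead : ∀ t, FreeMonoid.toList l ≠ x :: t) :
    b.coeff l = 0 := by
  classical
  have h1 : (b * MonoidAlgebra.single (FreeMonoid.of x) (1 : K) :
      MonoidAlgebra K (FreeMonoid X)).coeff (l * FreeMonoid.of x) = b.coeff l * 1 := by
    refine MonoidAlgebra.mul_single_apply_aux (x := b) _ fun a _ => ?_
    constructor
    · intro h
      apply FreeMonoid.toList.injective
      have := congrArg FreeMonoid.toList h
      rw [FreeMonoid.toList_mul, FreeMonoid.toList_mul] at this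
      exact List.append_cancel_right this
    · intro h; rw [h]
  have h2 : (MonoidAlgebra.single (FreeMonoid.of x) (1 : K) * b :
      MonoidAlgebra K (FreeMonoid X)).coeff (l * FreeMonoid.of x) = 0 := by
    refine MonoidAlgebra.single_mul_apply_of_not_exists_mul 1 b ?_
    rintro ⟨d, hd⟩
    have := congrArg FreeMonoid.toList hd
    rw [FreeMonoid.toList_mul, FreeMonoid.toList_mul, FreeMonoid.toList_of] at this
    cases hl' : FreeMonoid.toList l with
    | nil => exact hl (FreeMonoid.toList.injective (by rw [hl', FreeMonoid.toList_one]))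
    | cons a t =>
        rw [hl'] at this
        simp only [List.cons_append, List.singleton_append, List.cons.injEq] at this
        exact hhead t (by rw [hl', this.1])
  rw [← hcomm, h2] at h1
  rw [mul_one] at h1
  exact h1.symm

/-- The image of a central element in the monoid algebra vanishes. -/
lemma iotaB_central_eq_zero {x y : X} (hxy : x ≠ y) {z : FreeLieAlgebra K X}
    (hz : ∀ w : FreeLieAlgebra K X, ⁅z, w⁆ = 0) : iotaB K X z = 0 := by
  classical
  have hcomm : ∀ t : X, MonoidAlgebra.single (FreeMonoid.of t) (1 : K) * iotaB K X z =
      iotaB K X z * MonoidAlgebra.single (FreeMonoid.of t) (1 : K) := by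
    intro t
    have h0 : iotaB K X ⁅z, of K t⁆ = 0 := by rw [hz (of K t), map_zero]
    rw [LieHom.map_lie, iotaB_of, Ring.lie_def, sub_eq_zero] at h0
    exact h0.symm
  have hmem := iotaB_mem_augB K X z
  rw [augB, MonoidAlgebra.mem_supported] at hmem
  ext l
  rw [MonoidAlgebra.coeff_zero, Finsupp.coe_zero, Pi.zero_apply]
  by_cases hl : l = 1
  · subst hl
    by_contra h
    exact (hmem (Finsupp.mem_support_iff.mpr h)) rfl
  · cases hl' : FreeMonoid.toList l with
    | nil => exact absurd (FreeMonoid.toList.injective (by rw [hl', FreeMonoid.toList_one])) hl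
    | cons a t =>
        rcases ne_or_eq a x with hax | rfl
        · refine coeff_zero_of_comm K X (hcomm x) hl (fun t' ht' => ?_)
          rw [hl', List.cons.injEq] at ht'
          exact hax ht'.1
        · refine coeff_zero_of_comm K X (hcomm y) hl (fun t' ht' => ?_)
          rw [hl', List.cons.injEq] at ht'
          exact hxy ht'.1

/-- Simultaneous eigenvectors with distinct natural eigenvalues summing to zero vanish. -/
lemma eigen_vanish {M : Type*} [AddCommGroup M] [Module K M] (D : M →ₗ[K] M) :
    ∀ (s : Finset ℕ) (u : ℕ → M), (∀ n ∈ s, D (u n) = (n : K) • u n) →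
      (∑ n ∈ s, u n) = 0 → ∀ n ∈ s, u n = 0 := by
  intro s
  induction s using Finset.induction_on with
  | empty => intro u _ _ n hn; exact absurd hn (Finset.notMem_empty n)
  | @insert a s' ha ih =>
      intro u hu hsum
      have hvz : ∀ n ∈ s', ((n : K) - (a : K)) • u n = 0 := by
        refine ih (fun n => ((n : K) - (a : K)) • u n) (fun n hn => ?_) ?_
        · rw [map_smul, hu n (Finset.mem_insert_of_mem hn), smul_comm]
        · have h1 : ∑ n ∈ insert a s', ((n : K) - (a : K)) • u n =
              D (∑ n ∈ insert a s', u n) - (a : K) • ∑ n ∈ insert a s', u n := by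
            rw [map_sum, Finset.smul_sum, ← Finset.sum_sub_distrib]
            refine Finset.sum_congr rfl fun n hn => ?_
            rw [hu n hn, sub_smul]
          rw [hsum, map_zero, smul_zero, sub_zero] at h1
          rw [Finset.sum_insert ha, sub_self, zero_smul, zero_add] at h1
          exact h1
      have huz : ∀ n ∈ s', u n = 0 := by
        intro n hn
        have hna : (n : K) - (a : K) ≠ 0 := by
          rw [sub_ne_zero]
          exact fun hc => ha (by rwa [Nat.cast_injective hc] at hn)
        exact (smul_eq_zero.mp (hvz n hn)).resolve_left hna
      intro n hn
      rcases Finset.mem_insert.mp hn with rfl | hn'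
      · have h := hsum
        rw [Finset.sum_insert ha, Finset.sum_eq_zero huz, add_zero] at h
        exact h
      · exact huz n hn'

/-- A central element of a free Lie algebra on at least two generators is zero. -/
lemma freeLie_central_eq_zero {x y : X} (hxy : x ≠ y) {z : FreeLieAlgebra K X}
    (hz : ∀ w : FreeLieAlgebra K X, ⁅z, w⁆ = 0) : z = 0 := by
  classical
  obtain ⟨f, hf, hsum⟩ := (Submodule.mem_iSup_iff_exists_finsupp _ _).mp (mem_iSup_homog K X z)
  have hsum2 : ∑ n ∈ f.support, f n = z := hsum
  set Dlin : FreeLieAlgebra K X →ₗ[K] FreeLieAlgebra K X :=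
    (thetaB K X).comp (iotaB K X).toLinearMap with hD
  have hDapp : ∀ w, Dlin w = thetaB K X (iotaB K X w) := fun w => rfl
  have hDz : Dlin z = 0 := by
    rw [hDapp, iotaB_central_eq_zero K X hxy hz, map_zero]
  have hDf : ∀ n, Dlin (f n) = (n : K) • f n := fun n => theta_iota_homog K X (hf n)
  have hsum' : ∑ n ∈ f.support, (n : K) • f n = 0 := by
    have h3 : Dlin (∑ n ∈ f.support, f n) = 0 := by rw [hsum2]; exact hDz
    rw [map_sum] at h3
    rw [← h3]
    exact Finset.sum_congr rfl fun n _ => (hDf n).symm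
  have key : ∀ n ∈ f.support, (n : K) • f n = 0 := by
    refine eigen_vanish K Dlin f.support (fun n => (n : K) • f n) (fun n _ => ?_) hsum'
    rw [map_smul, hDf n, smul_comm]
  have hfz : ∀ n, f n = 0 := by
    intro n
    by_contra hc
    have hn : n ∈ f.support := Finsupp.mem_support_iff.mpr hc
    rcases Nat.eq_zero_or_pos n with rfl | hpos
    · have h4 := hf 0
      rw [homog_zero_eq_bot, Submodule.mem_bot] at h4
      exact hc h4
    · have h5 := key n hn
      have hn0 : (n : K) ≠ 0 := Nat.cast_ne_zero.mpr (Nat.pos_iff_ne_zero.mp hpos)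
      exact hc ((smul_eq_zero.mp h5).resolve_left hn0)
  rw [← hsum2]
  exact Finset.sum_eq_zero fun n _ => hfz n

end FreeLie4
/-! ### Part II: the structure of `𝔱_2^Γ` -/

section Part2

set_option linter.unusedSectionVars false

lemma lieHom_map_sum {R L L' : Type*} [CommRing R] [LieRing L] [LieAlgebra R L]
    [LieRing L'] [LieAlgebra R L'] (f : L →ₗ⁅R⁆ L') {ι : Type*} (s : Finset ι) (g : ι → L) :
    f (∑ i ∈ s, g i) = ∑ i ∈ s, f (g i) := by
  induction s using Finset.cons_induction with
  | empty => exact map_zero f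
  | cons a s ha ih => rw [Finset.sum_cons, Finset.sum_cons, map_add, ih]

lemma lieK (s t : k) : ⁅s, t⁆ = 0 := by
  rw [Ring.lie_def, mul_comm, sub_self]

/-- The free Lie algebra on `N + 1` generators underlying `𝔱_2^Γ`. -/
local notation "F2" => FreeLieAlgebra k (Option (ZMod N))

/-- Target of the structure morphism: `F2 × k` with `k` central. -/
local notation "L2" => (FreeLieAlgebra k (Option (ZMod N)) × k)

/-- Image of the generators. -/
noncomputable def g2 : CGen N 2 → L2 := fun g =>
  match g with
  | Sum.inl i =>
      if i = 0 then ((of k none : F2), (0 : k))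
      else (-(of k (none : Option (ZMod N))) - ∑ α : ZMod N, of k (some α), (1 : k))
  | Sum.inr (p, α) =>
      if p.1.1 = 0 then ((of k (some α) : F2), (0 : k))
      else ((of k (some (-α)) : F2), (0 : k))

/-- The structure morphism from the free Lie algebra on the generators of `𝔱_2^Γ`. -/
noncomputable def phiF : FreeLieAlgebra k (CGen N 2) →ₗ⁅k⁆ L2 :=
  FreeLieAlgebra.lift k (g2 k N)

lemma phiF_c0 : phiF k N (cT0 k N 2 0) = ((of k none : F2), (0 : k)) := by
  rw [cT0, phiF]
  refine (FreeLieAlgebra.lift_of_apply _ _).trans ?_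
  simp [g2]

lemma phiF_c1 : phiF k N (cT0 k N 2 1) =
    (-(of k (none : Option (ZMod N))) - ∑ α : ZMod N, of k (some α), (1 : k)) := by
  rw [cT0, phiF]
  refine (FreeLieAlgebra.lift_of_apply _ _).trans ?_
  have : (1 : Fin 2) ≠ 0 := by decide
  simp [g2, this]

lemma phiF_t01 (α : ZMod N) : phiF k N (cT k N 2 0 1 α) = ((of k (some α) : F2), (0 : k)) := by
  rw [cT, dif_pos (by decide : (0 : Fin 2) ≠ 1), phiF]
  refine (FreeLieAlgebra.lift_of_apply _ _).trans ?_
  simp [g2]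

lemma phiF_t10 (α : ZMod N) : phiF k N (cT k N 2 1 0 α) =
    ((of k (some (-α)) : F2), (0 : k)) := by
  rw [cT, dif_pos (by decide : (1 : Fin 2) ≠ 0), phiF]
  refine (FreeLieAlgebra.lift_of_apply _ _).trans ?_
  have : (1 : Fin 2) ≠ 0 := by decide
  simp [g2, this]

lemma sum_neg_reindex : ∑ α : ZMod N, of k (some (-α) : Option (ZMod N)) =
    ∑ α : ZMod N, of k (some α : Option (ZMod N)) := by
  refine Fintype.sum_equiv (Equiv.neg (ZMod N)) _ _ fun α => ?_
  simp

lemma sum_pair {ι : Type*} (s : Finset ι) (f : ι → FreeLieAlgebra k (Option (ZMod N))) :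
    (∑ i ∈ s, ((f i, 0) : L2)) = (∑ i ∈ s, f i, (0 : k)) := by
  induction s using Finset.cons_induction with
  | empty => simp; rfl
  | cons a s ha ih => rw [Finset.sum_cons, Finset.sum_cons, ih, Prod.mk_add_mk, add_zero]

lemma fin2_no_three (i j l : Fin 2) (hij : i ≠ j) (hil : i ≠ l) (hjl : j ≠ l) : False := by
  omega

lemma phiF_rels : CRels k N 2 ⊆ {x | phiF k N x = 0} := by
  intro x hx
  rcases hx with ((((ha | hb) | hb') | hc) | hd) | he
  · -- (a)
    obtain ⟨i, j, α, hij, rfl⟩ := ha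
    have hi : i = 0 ∨ i = 1 := by omega
    have hj : j = 0 ∨ j = 1 := by omega
    rcases hi with rfl | rfl <;> rcases hj with rfl | rfl
    · exact absurd rfl hij
    · show phiF k N (cT k N 2 0 1 α - cT k N 2 1 0 (-α)) = 0
      rw [map_sub, phiF_t01, phiF_t10, neg_neg, sub_self]
    · show phiF k N (cT k N 2 1 0 α - cT k N 2 0 1 (-α)) = 0
      rw [map_sub, phiF_t10, phiF_t01, sub_self]
    · exact absurd rfl hij
  · obtain ⟨i, j, l, α, hij, hil, hjl, -⟩ := hb
    exact (fin2_no_three i j l hij hil hjl).elim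
  · obtain ⟨i, j, l, m, α, β, hij, hil, him, hjl, hjm, hlm, -⟩ := hb'
    exact (fin2_no_three i j l hij hil hjl).elim
  · obtain ⟨i, j, l, α, β, hij, hil, hjl, -⟩ := hc
    exact (fin2_no_three i j l hij hil hjl).elim
  · -- (d)
    obtain ⟨i, j, hij, rfl⟩ := hd
    have hi : i = 0 ∨ i = 1 := by omega
    have hj : j = 0 ∨ j = 1 := by omega
    rcases hi with rfl | rfl <;> rcases hj with rfl | rfl
    · exact absurd rfl hij
    · show phiF k N ⁅cT0 k N 2 0, cT0 k N 2 1 + ∑ α : ZMod N, cT k N 2 0 1 α⁆ = 0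
      rw [LieHom.map_lie, map_add, lieHom_map_sum, phiF_c0, phiF_c1]
      simp only [phiF_t01]
      rw [sum_pair, Prod.mk_add_mk, sub_add_cancel]
      refine Prod.ext ?_ ?_
      · show ⁅of k (none : Option (ZMod N)), -of k (none : Option (ZMod N))⁆ = 0
        rw [lie_neg, lie_self, neg_zero]
      · exact lieK k _ _
    · show phiF k N ⁅cT0 k N 2 1, cT0 k N 2 0 + ∑ α : ZMod N, cT k N 2 1 0 α⁆ = 0
      rw [LieHom.map_lie, map_add, lieHom_map_sum, phiF_c0, phiF_c1]
      simp only [phiF_t10]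
      rw [sum_pair, sum_neg_reindex, Prod.mk_add_mk, add_zero]
      refine Prod.ext ?_ ?_
      · show ⁅-of k (none : Option (ZMod N)) - ∑ α : ZMod N, of k (some α),
          of k (none : Option (ZMod N)) + ∑ α : ZMod N, of k (some α)⁆ = 0
        have h0 : -of k (none : Option (ZMod N)) - ∑ α : ZMod N, of k (some α) =
            -(of k (none : Option (ZMod N)) + ∑ α : ZMod N, of k (some α)) := by abel
        rw [h0, neg_lie, lie_self, neg_zero]
      · exact lieK k _ _
    · exact absurd rfl hij
  · -- (e)
    obtain ⟨i, j, α, hij, rfl⟩ := he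
    have hi : i = 0 ∨ i = 1 := by omega
    have hj : j = 0 ∨ j = 1 := by omega
    rcases hi with rfl | rfl <;> rcases hj with rfl | rfl
    · exact absurd rfl hij
    · show phiF k N ⁅cT0 k N 2 0 + cT0 k N 2 1 + ∑ β : ZMod N, cT k N 2 0 1 β,
        cT k N 2 0 1 α⁆ = 0
      rw [LieHom.map_lie, map_add, map_add, lieHom_map_sum,
        phiF_c0, phiF_c1, phiF_t01]
      simp only [phiF_t01]
      rw [sum_pair, Prod.mk_add_mk, Prod.mk_add_mk]
      refine Prod.ext ?_ ?_
      · show ⁅of k (none : Option (ZMod N)) +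
            (-of k (none : Option (ZMod N)) - ∑ β : ZMod N, of k (some β)) +
            ∑ β : ZMod N, of k (some β), of k (some α)⁆ = 0
        have h0 : of k (none : Option (ZMod N)) +
            (-of k (none : Option (ZMod N)) - ∑ β : ZMod N, of k (some β)) +
            ∑ β : ZMod N, of k (some β) = 0 := by abel
        rw [h0, zero_lie]
      · exact lieK k _ _
    · show phiF k N ⁅cT0 k N 2 1 + cT0 k N 2 0 + ∑ β : ZMod N, cT k N 2 1 0 β,
        cT k N 2 1 0 α⁆ = 0
      rw [LieHom.map_lie, map_add, map_add, lieHom_map_sum,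
        phiF_c0, phiF_c1, phiF_t10]
      simp only [phiF_t10]
      rw [sum_pair, sum_neg_reindex, Prod.mk_add_mk, Prod.mk_add_mk]
      refine Prod.ext ?_ ?_
      · show ⁅-of k (none : Option (ZMod N)) - ∑ β : ZMod N, of k (some β) +
            of k (none : Option (ZMod N)) +
            ∑ β : ZMod N, of k (some β), of k (some (-α))⁆ = 0
        have h0 : -of k (none : Option (ZMod N)) - ∑ β : ZMod N, of k (some β) +
            of k (none : Option (ZMod N)) +
            ∑ β : ZMod N, of k (some β) = 0 := by abel
        rw [h0, zero_lie]
      · exact lieK k _ _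
    · exact absurd rfl hij

/-- Canonical projection as a morphism of Lie algebras. -/
noncomputable def mkC : FreeLieAlgebra k (CGen N 2) →ₗ⁅k⁆ Cyc k N 2 where
  toLinearMap := (CIdeal k N 2).toSubmodule.mkQ
  map_lie' := rfl

lemma mkC_eq_mk' (q : FreeLieAlgebra k (CGen N 2)) :
    mkC k N q = LieSubmodule.Quotient.mk' (CIdeal k N 2) q := rfl

lemma mkC_eq_zero (q : FreeLieAlgebra k (CGen N 2)) :
    mkC k N q = 0 ↔ q ∈ CIdeal k N 2 := by
  rw [mkC_eq_mk']
  exact LieSubmodule.Quotient.mk_eq_zero (CIdeal k N 2)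

lemma cideal_le_ker : CIdeal k N 2 ≤ (phiF k N).ker := by
  rw [CIdeal]
  refine (LieSubmodule.lieSpan_le).mpr ?_
  intro x hx
  exact (LieHom.mem_ker).mpr (phiF_rels k N hx)

/-- The structure morphism descends to `𝔱_2^Γ`. -/
noncomputable def phiQ : Cyc k N 2 →ₗ⁅k⁆ L2 where
  toLinearMap := (CIdeal k N 2).toSubmodule.liftQ (phiF k N).toLinearMap
    (fun x hx => LinearMap.mem_ker.mpr ((LieHom.mem_ker).mp (cideal_le_ker k N hx)))
  map_lie' := by
    intro x y
    refine Quotient.inductionOn₂' x y fun a b => ?_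
    show (CIdeal k N 2).toSubmodule.liftQ _ _ (mkC k N ⁅a, b⁆) = _
    rw [show (mkC k N ⁅a, b⁆ : Cyc k N 2) = Submodule.Quotient.mk ⁅a, b⁆ from rfl,
      Submodule.liftQ_apply]
    exact (phiF k N).map_lie a b

lemma phiQ_mk (q : FreeLieAlgebra k (CGen N 2)) : phiQ k N (mkC k N q) = phiF k N q := rfl

/-- Inclusion of the generators of `𝔱_2^Γ` from the free Lie algebra on `N + 1` generators. -/
noncomputable def psi1 : FreeLieAlgebra k (Option (ZMod N)) →ₗ⁅k⁆ Cyc k N 2 :=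
  FreeLieAlgebra.lift k fun o =>
    match o with
    | none => CT0 k N 2 0
    | some α => CT k N 2 0 1 α

@[simp] lemma psi1_none : psi1 k N (of k none) = CT0 k N 2 0 :=
  FreeLieAlgebra.lift_of_apply _ _

@[simp] lemma psi1_some (α : ZMod N) : psi1 k N (of k (some α)) = CT k N 2 0 1 α :=
  FreeLieAlgebra.lift_of_apply _ _

/-- The central element of `𝔱_2^Γ`. -/
noncomputable def Celt : Cyc k N 2 :=
  CT0 k N 2 0 + CT0 k N 2 1 + ∑ α : ZMod N, CT k N 2 0 1 α

lemma mkC_cpre :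
    mkC k N (cT0 k N 2 0 + cT0 k N 2 1 + ∑ α : ZMod N, cT k N 2 0 1 α) = Celt k N := by
  rw [map_add, map_add, lieHom_map_sum]
  rfl

lemma memA (α : ZMod N) : cT k N 2 0 1 α - cT k N 2 1 0 (-α) ∈ CIdeal k N 2 := by
  refine LieSubmodule.subset_lieSpan ?_
  rw [CRels]
  exact Or.inl (Or.inl (Or.inl (Or.inl (Or.inl ⟨0, 1, α, by decide, rfl⟩))))

lemma memD01 : ⁅cT0 k N 2 0, cT0 k N 2 1 + ∑ α : ZMod N, cT k N 2 0 1 α⁆ ∈ CIdeal k N 2 := by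
  refine LieSubmodule.subset_lieSpan ?_
  rw [CRels]
  exact Or.inl (Or.inr ⟨0, 1, by decide, rfl⟩)

lemma memD10 : ⁅cT0 k N 2 1, cT0 k N 2 0 + ∑ α : ZMod N, cT k N 2 1 0 α⁆ ∈ CIdeal k N 2 := by
  refine LieSubmodule.subset_lieSpan ?_
  rw [CRels]
  exact Or.inl (Or.inr ⟨1, 0, by decide, rfl⟩)

lemma memE01 (α : ZMod N) :
    ⁅cT0 k N 2 0 + cT0 k N 2 1 + ∑ β : ZMod N, cT k N 2 0 1 β, cT k N 2 0 1 α⁆ ∈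
      CIdeal k N 2 := by
  refine LieSubmodule.subset_lieSpan ?_
  rw [CRels]
  exact Or.inr ⟨0, 1, α, by decide, rfl⟩

lemma sum_neg_reindexC : ∑ α : ZMod N, cT k N 2 1 0 (-α) = ∑ α : ZMod N, cT k N 2 1 0 α := by
  refine Fintype.sum_equiv (Equiv.neg (ZMod N)) _ _ fun α => ?_
  simp

lemma cpre_lie_c0 :
    ⁅cT0 k N 2 0 + cT0 k N 2 1 + ∑ α : ZMod N, cT k N 2 0 1 α, cT0 k N 2 0⁆ ∈
      CIdeal k N 2 := by
  have e1 : ⁅cT0 k N 2 0 + cT0 k N 2 1 + ∑ α : ZMod N, cT k N 2 0 1 α, cT0 k N 2 0⁆ =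
      -⁅cT0 k N 2 0, cT0 k N 2 1 + ∑ α : ZMod N, cT k N 2 0 1 α⁆ := by
    rw [add_assoc, add_lie, lie_self, zero_add, ← lie_skew]
  rw [e1]
  exact (CIdeal k N 2).neg_mem (memD01 k N)

lemma cpre_lie_c1 :
    ⁅cT0 k N 2 0 + cT0 k N 2 1 + ∑ α : ZMod N, cT k N 2 0 1 α, cT0 k N 2 1⁆ ∈
      CIdeal k N 2 := by
  have e1 : ⁅cT0 k N 2 0 + cT0 k N 2 1 + ∑ α : ZMod N, cT k N 2 0 1 α, cT0 k N 2 1⁆ =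
      -⁅cT0 k N 2 1, cT0 k N 2 0 + ∑ α : ZMod N, cT k N 2 0 1 α⁆ := by
    rw [← lie_skew]
    congr 1
    have h2 : cT0 k N 2 0 + cT0 k N 2 1 + ∑ α : ZMod N, cT k N 2 0 1 α =
        (cT0 k N 2 0 + ∑ α : ZMod N, cT k N 2 0 1 α) + cT0 k N 2 1 := by abel
    rw [h2, lie_add, lie_self, add_zero]
  rw [e1]
  refine (CIdeal k N 2).neg_mem ?_
  have hsplit : cT0 k N 2 0 + ∑ α : ZMod N, cT k N 2 0 1 α =
      (cT0 k N 2 0 + ∑ α : ZMod N, cT k N 2 1 0 α) +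
        ∑ α : ZMod N, (cT k N 2 0 1 α - cT k N 2 1 0 (-α)) := by
    rw [Finset.sum_sub_distrib, sum_neg_reindexC]
    abel
  rw [hsplit, lie_add]
  refine (CIdeal k N 2).add_mem (memD10 k N) ?_
  refine (CIdeal k N 2).lie_mem ?_
  exact Submodule.sum_mem _ fun α _ => memA k N α

lemma cpre_lie_t01 (α : ZMod N) :
    ⁅cT0 k N 2 0 + cT0 k N 2 1 + ∑ β : ZMod N, cT k N 2 0 1 β, cT k N 2 0 1 α⁆ ∈
      CIdeal k N 2 :=
  memE01 k N α

lemma cpre_lie_t10 (α : ZMod N) :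
    ⁅cT0 k N 2 0 + cT0 k N 2 1 + ∑ β : ZMod N, cT k N 2 0 1 β, cT k N 2 1 0 α⁆ ∈
      CIdeal k N 2 := by
  have hsplit : cT k N 2 1 0 α =
      cT k N 2 0 1 (-α) - (cT k N 2 0 1 (-α) - cT k N 2 1 0 α) := by abel
  rw [hsplit, lie_sub]
  refine (CIdeal k N 2).sub_mem (cpre_lie_t01 k N (-α)) ?_
  refine (CIdeal k N 2).lie_mem ?_
  have := memA k N (-α)
  rwa [neg_neg] at this

lemma celt_central (w : Cyc k N 2) : ⁅Celt k N, w⁆ = 0 := by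
  let S : LieSubalgebra k (FreeLieAlgebra k (CGen N 2)) :=
    { carrier := {q | ⁅Celt k N, mkC k N q⁆ = 0}
      add_mem' := fun {a b} ha hb => by
        show ⁅Celt k N, mkC k N (a + b)⁆ = 0
        rw [map_add, lie_add, ha, hb, add_zero]
      zero_mem' := by
        show ⁅Celt k N, mkC k N 0⁆ = 0
        rw [map_zero, lie_zero]
      smul_mem' := fun c q hq => by
        show ⁅Celt k N, mkC k N (c • q)⁆ = 0
        rw [map_smul, lie_smul, hq, smul_zero]
      lie_mem' := fun {a b} ha hb => by
        show ⁅Celt k N, mkC k N ⁅a, b⁆⁆ = 0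
        have ha' : ⁅Celt k N, mkC k N a⁆ = 0 := ha
        have hb' : ⁅Celt k N, mkC k N b⁆ = 0 := hb
        rw [LieHom.map_lie, leibniz_lie, ha', hb', zero_lie, lie_zero, add_zero] }
  have hgen : ∀ g : CGen N 2, of k g ∈ S := by
    intro g
    show ⁅Celt k N, mkC k N (of k g)⁆ = 0
    rw [← mkC_cpre, ← LieHom.map_lie, mkC_eq_zero]
    match g with
    | Sum.inl i =>
        have hi : i = 0 ∨ i = 1 := by omega
        rcases hi with rfl | rfl
        · exact cpre_lie_c0 k N
        · exact cpre_lie_c1 k N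
    | Sum.inr (⟨(i, j), hij⟩, α) =>
        have hi : i = 0 ∨ i = 1 := by omega
        have hj : j = 0 ∨ j = 1 := by omega
        rcases hi with rfl | rfl <;> rcases hj with rfl | rfl
        · exact absurd rfl hij
        · have : of k (Sum.inr (⟨((0 : Fin 2), (1 : Fin 2)), hij⟩, α) : CGen N 2) =
              cT k N 2 0 1 α := by rw [cT, dif_pos]; rfl
          exact (congrArg (fun t => ⁅cT0 k N 2 0 + cT0 k N 2 1 + ∑ β : ZMod N, cT k N 2 0 1 β, t⁆ ∈
            CIdeal k N 2) this).mpr (cpre_lie_t01 k N α)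
        · have : of k (Sum.inr (⟨((1 : Fin 2), (0 : Fin 2)), hij⟩, α) : CGen N 2) =
              cT k N 2 1 0 α := by rw [cT, dif_pos]; rfl
          exact (congrArg (fun t => ⁅cT0 k N 2 0 + cT0 k N 2 1 + ∑ β : ZMod N, cT k N 2 0 1 β, t⁆ ∈
            CIdeal k N 2) this).mpr (cpre_lie_t10 k N α)
        · exact absurd rfl hij
  obtain ⟨q, rfl⟩ := LieSubmodule.Quotient.surjective_mk' (CIdeal k N 2) w
  exact freeLie_mem_subalgebra k (CGen N 2) S hgen q

lemma celt_central' (w : Cyc k N 2) : ⁅w, Celt k N⁆ = 0 := by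
  rw [← lie_skew, celt_central, neg_zero]

/-- The splitting morphism `F2 × k → 𝔱_2^Γ`. -/
noncomputable def psi : L2 →ₗ⁅k⁆ Cyc k N 2 where
  toLinearMap := (psi1 k N).toLinearMap ∘ₗ LinearMap.fst k _ k +
    (LinearMap.toSpanSingleton k (Cyc k N 2) (Celt k N)) ∘ₗ LinearMap.snd k _ k
  map_lie' := by
    intro p q
    show psi1 k N ⁅p.1, q.1⁆ + ⁅p.2, q.2⁆ • Celt k N =
      ⁅psi1 k N p.1 + p.2 • Celt k N, psi1 k N q.1 + q.2 • Celt k N⁆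
    rw [lieK, zero_smul, add_zero, LieHom.map_lie]
    rw [lie_add, add_lie, add_lie, lie_smul (q.2) (psi1 k N p.1) (Celt k N),
      celt_central' k N, smul_zero, smul_lie, celt_central k N, smul_zero,
      smul_lie, lie_smul, celt_central k N, smul_zero, smul_zero, add_zero,
      add_zero, add_zero]

lemma psi_apply (p : L2) : psi k N p = psi1 k N p.1 + p.2 • Celt k N := rfl

/-- The component inclusion `F2 → F2 × k` as a Lie morphism. -/
noncomputable def inl2 : FreeLieAlgebra k (Option (ZMod N)) →ₗ⁅k⁆ L2 where
  toLinearMap := LinearMap.inl k _ k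
  map_lie' := by
    intro x y
    exact Prod.ext rfl (lie_zero (0 : k)).symm

lemma phiQ_comp_psi1 : (phiQ k N).comp (psi1 k N) = inl2 k N := by
  apply FreeLieAlgebra.hom_ext
  intro o
  match o with
  | none =>
      rw [LieHom.comp_apply, psi1_none]
      show phiF k N (cT0 k N 2 0) = _
      rw [phiF_c0]
      rfl
  | some α =>
      rw [LieHom.comp_apply, psi1_some]
      show phiF k N (cT k N 2 0 1 α) = _
      rw [phiF_t01]
      rfl

lemma phiQ_psi1 (w : FreeLieAlgebra k (Option (ZMod N))) : phiQ k N (psi1 k N w) = (w, 0) :=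
  LieHom.congr_fun (phiQ_comp_psi1 k N) w

lemma mkC_t10 (α : ZMod N) : mkC k N (cT k N 2 1 0 α) = CT k N 2 0 1 (-α) := by
  have hmem : cT k N 2 0 1 (-α) - cT k N 2 1 0 α ∈ CIdeal k N 2 := by
    have := memA k N (-α)
    rwa [neg_neg] at this
  have h0 : mkC k N (cT k N 2 0 1 (-α) - cT k N 2 1 0 α) = 0 := (mkC_eq_zero k N _).mpr hmem
  rw [map_sub, sub_eq_zero] at h0
  exact h0.symm

lemma psi_comp_phiQ_mkC : (psi k N).comp ((phiQ k N).comp (mkC k N)) = mkC k N := by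
  apply FreeLieAlgebra.hom_ext
  intro g
  rw [LieHom.comp_apply, LieHom.comp_apply, phiQ_mk]
  match g with
  | Sum.inl i =>
      have hi : i = 0 ∨ i = 1 := by omega
      rcases hi with rfl | rfl
      · show psi k N (phiF k N (cT0 k N 2 0)) = mkC k N (cT0 k N 2 0)
        rw [phiF_c0, psi_apply]
        show psi1 k N (of k none) + (0 : k) • Celt k N = _
        rw [psi1_none, zero_smul, add_zero]
        rfl
      · show psi k N (phiF k N (cT0 k N 2 1)) = mkC k N (cT0 k N 2 1)
        rw [phiF_c1, psi_apply]
        show psi1 k N (-of k (none : Option (ZMod N)) - ∑ α : ZMod N, of k (some α)) +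
          (1 : k) • Celt k N = _
        rw [map_sub, map_neg, lieHom_map_sum, psi1_none, one_smul]
        simp only [psi1_some]
        have hmk : mkC k N (cT0 k N 2 1) = CT0 k N 2 1 := rfl
        rw [hmk, Celt]
        abel
  | Sum.inr (⟨(i, j), hij⟩, α) =>
      have hi : i = 0 ∨ i = 1 := by omega
      have hj : j = 0 ∨ j = 1 := by omega
      rcases hi with rfl | rfl <;> rcases hj with rfl | rfl
      · exact absurd rfl hij
      · have hof : (of k (Sum.inr (⟨((0 : Fin 2), (1 : Fin 2)), hij⟩, α) : CGen N 2)) =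
            cT k N 2 0 1 α := by rw [cT, dif_pos]; rfl
        refine (congrArg (fun t => psi k N (phiF k N t) = mkC k N t) hof).mpr ?_
        beta_reduce
        rw [phiF_t01, psi_apply]
        show psi1 k N (of k (some α)) + (0 : k) • Celt k N = _
        rw [psi1_some, zero_smul, add_zero]
        rfl
      · have hof : (of k (Sum.inr (⟨((1 : Fin 2), (0 : Fin 2)), hij⟩, α) : CGen N 2)) =
            cT k N 2 1 0 α := by rw [cT, dif_pos]; rfl
        refine (congrArg (fun t => psi k N (phiF k N t) = mkC k N t) hof).mpr ?_
        beta_reduce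
        rw [phiF_t10, psi_apply]
        show psi1 k N (of k (some (-α))) + (0 : k) • Celt k N = _
        rw [psi1_some, zero_smul, add_zero, mkC_t10]
      · exact absurd rfl hij

lemma psi_phiQ (w : Cyc k N 2) : psi k N (phiQ k N w) = w := by
  obtain ⟨q, rfl⟩ := LieSubmodule.Quotient.surjective_mk' (CIdeal k N 2) w
  have h := LieHom.congr_fun (psi_comp_phiQ_mkC k N) q
  rw [LieHom.comp_apply, LieHom.comp_apply] at h
  exact h

end Part2

theorem cyc2_center_eq_span_aux :
    (LieAlgebra.center k (Cyc k N 2)).toSubmodule =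
      Submodule.span k
        {CT0 k N 2 0 + CT0 k N 2 1 + ∑ α : ZMod N, CT k N 2 0 1 α} := by
  have hCeq : CT0 k N 2 0 + CT0 k N 2 1 + ∑ α : ZMod N, CT k N 2 0 1 α = Celt k N := rfl
  rw [hCeq]
  apply le_antisymm
  · intro z hz
    have hz' : ∀ x : Cyc k N 2, ⁅x, z⁆ = 0 :=
      (LieModule.mem_maxTrivSubmodule k (Cyc k N 2) (Cyc k N 2) z).mp hz
    have ha : ∀ w : FreeLieAlgebra k (Option (ZMod N)), ⁅(phiQ k N z).1, w⁆ = 0 := by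
      intro w
      have h1 : ⁅z, psi1 k N w⁆ = 0 := by rw [← lie_skew, hz', neg_zero]
      have h2 : ⁅phiQ k N z, ((w, 0) : FreeLieAlgebra k (Option (ZMod N)) × k)⁆ = 0 := by
        rw [← phiQ_psi1, ← LieHom.map_lie, h1, map_zero]
      exact congrArg Prod.fst h2
    have hz1 : (phiQ k N z).1 = 0 :=
      freeLie_central_eq_zero k (Option (ZMod N))
        (x := none) (y := some 0) (by simp) ha
    have hzz : z = (phiQ k N z).2 • Celt k N := by
      conv_lhs => rw [← psi_phiQ k N z]
      rw [show psi k N (phiQ k N z) =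
        psi1 k N ((phiQ k N z).1) + ((phiQ k N z).2) • Celt k N from rfl]
      rw [hz1, map_zero, zero_add]
    rw [hzz]
    exact Submodule.smul_mem _ _ (Submodule.subset_span rfl)
  · rw [Submodule.span_le]
    intro x hx
    rw [Set.mem_singleton_iff] at hx
    subst hx
    rw [SetLike.mem_coe]
    exact (LieModule.mem_maxTrivSubmodule k (Cyc k N 2) (Cyc k N 2) (Celt k N)).mpr
      (fun x => celt_central' k N x)


/-- The center of the cyclotomic Drinfeld–Kohno Lie algebra `𝔱_2^Γ` is
the one-dimensional subspace spanned by `c = t_{01} + t_{02} + Σ_{α ∈ Γ} t_{12}^α`. -/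
theorem cyc2_center_eq_span :
    (LieAlgebra.center k (Cyc k N 2)).toSubmodule =
      Submodule.span k
        {CT0 k N 2 0 + CT0 k N 2 1 + ∑ α : ZMod N, CT k N 2 0 1 α} := by
  exact cyc2_center_eq_span_aux k N
end

section
/- Let f be a doubly pointed partially defined map from {0, 1, …, m} to {0, 1, …, n}, i.e. a function f : Fin (m+1) → Option (Fin (n+1)) with f(0) = some 0. Then there exists a (necessarily unique) Lie algebra morphism (−)^f : 𝔱_n^Γ → 𝔱_m^Γ such that for all i ≠ j in {1, …, n} and all α ∈ Γ, (t_{ij}^α)^f = Σ_{k ∈ f⁻¹(i)} Σ_{l ∈ f⁻¹(j)} t_{kl}^α, and for all 1 ≤ i ≤ n, (t_{0i})^f = Σ_{j ∈ f⁻¹(i)} t_{0j} + Σ_{j, k ∈ f⁻¹(i), j < k} Σ_{γ ∈ Γ} t_{jk}^γ + Σ_{j ∈ f⁻¹(0) ∖ {0}} Σ_{k ∈ f⁻¹(i)} Σ_{γ ∈ Γ} t_{jk}^γ, where f⁻¹(i) = {k ∈ {1, …, m} : f(k) = some i}. -/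
/-! The cyclotomic Drinfeld–Kohno Lie algebras `𝔱_n^Γ` for `Γ = ℤ/Nℤ` (Definition 3.22).
The non-frozen strands `1, …, n` are indexed by `Fin n` (strand `i` corresponds to
`(i - 1 : Fin n)`), and `0` denotes the frozen strand. -/

open FreeLieAlgebra

variable (k : Type) [Field k] [CharZero k] (N : ℕ) [NeZero N]

set_option linter.unusedSectionVars false
set_option linter.unusedVariables false

section Basic

variable {n : ℕ}

/-- The quotient map as a plain function. -/
noncomputable abbrev mkQ (n : ℕ) : FreeLieAlgebra k (CGen N n) → Cyc k N n :=
  LieSubmodule.Quotient.mk' (CIdeal k N n)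

lemma mkQ_bracket (x y : FreeLieAlgebra k (CGen N n)) :
    mkQ k N n ⁅x, y⁆ = ⁅mkQ k N n x, mkQ k N n y⁆ := rfl

lemma mkQ_zero : mkQ k N n 0 = 0 := rfl

lemma mkQ_add (x y : FreeLieAlgebra k (CGen N n)) :
    mkQ k N n (x + y) = mkQ k N n x + mkQ k N n y :=
  Submodule.Quotient.mk_add _

lemma mkQ_sub (x y : FreeLieAlgebra k (CGen N n)) :
    mkQ k N n (x - y) = mkQ k N n x - mkQ k N n y :=
  Submodule.Quotient.mk_sub _

lemma mkQ_sum {ι : Type*} (s : Finset ι) (g : ι → FreeLieAlgebra k (CGen N n)) :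
    mkQ k N n (∑ i ∈ s, g i) = ∑ i ∈ s, mkQ k N n (g i) := by
  classical
  induction s using Finset.induction_on with
  | empty => simp [mkQ_zero]; rfl
  | insert a s' h ih => rw [Finset.sum_insert h, Finset.sum_insert h, mkQ_add, ih]

lemma mkQ_rel {x : FreeLieAlgebra k (CGen N n)} (h : x ∈ CRels k N n) :
    mkQ k N n x = 0 :=
  (LieSubmodule.Quotient.mk_eq_zero _).2 (LieSubmodule.subset_lieSpan h)

lemma CT_diag (p : Fin n) (α : ZMod N) : CT k N n p p α = 0 := by
  unfold CT cT
  rw [dif_neg (by simp)]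
  exact mkQ_zero k N

lemma CT_mk {p q : Fin n} (α : ZMod N) :
    CT k N n p q α = mkQ k N n (cT k N n p q α) := rfl

lemma CT0_mk (p : Fin n) : CT0 k N n p = mkQ k N n (cT0 k N n p) := rfl

lemma CT_symm {p q : Fin n} (h : p ≠ q) (α : ZMod N) :
    CT k N n p q α = CT k N n q p (-α) := by
  have hr : cT k N n p q α - cT k N n q p (-α) ∈ CRels k N n :=
    Or.inl <| Or.inl <| Or.inl <| Or.inl <| Or.inl <| ⟨p, q, α, h, rfl⟩
  have h0 := mkQ_rel k N hr
  rw [mkQ_sub] at h0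
  exact sub_eq_zero.mp h0

end Basic
section Rels

variable {n : ℕ}

/-- `τ_{pq} = Σ_γ t_{pq}^γ`. -/
noncomputable def tauC (n : ℕ) (p q : Fin n) : Cyc k N n :=
  ∑ γ : ZMod N, CT k N n p q γ

lemma tauC_diag (p : Fin n) : tauC k N n p p = 0 := by
  simp [tauC, CT_diag]

lemma tauC_symm (p q : Fin n) : tauC k N n p q = tauC k N n q p := by
  rcases eq_or_ne p q with rfl | h
  · rfl
  · unfold tauC
    calc ∑ γ : ZMod N, CT k N n p q γ = ∑ γ : ZMod N, CT k N n q p (-γ) :=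
          Finset.sum_congr rfl fun γ _ => CT_symm k N h γ
      _ = ∑ γ : ZMod N, CT k N n q p γ :=
          Fintype.sum_equiv (Equiv.neg (ZMod N)) _ _ fun γ => rfl

lemma rel_b {p q r : Fin n} (hpq : p ≠ q) (hpr : p ≠ r) (α : ZMod N) :
    ⁅CT0 k N n p, CT k N n q r α⁆ = 0 := by
  rcases eq_or_ne q r with rfl | hqr
  · rw [CT_diag, lie_zero]
  · rw [CT0_mk, CT_mk, ← mkQ_bracket]
    exact mkQ_rel k N (Or.inl <| Or.inl <| Or.inl <| Or.inl <| Or.inr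
      ⟨p, q, r, α, hpq, hpr, hqr, rfl⟩)

lemma rel_b' {p q r s : Fin n} (hpr : p ≠ r) (hps : p ≠ s) (hqr : q ≠ r) (hqs : q ≠ s)
    (α β : ZMod N) : ⁅CT k N n p q α, CT k N n r s β⁆ = 0 := by
  rcases eq_or_ne p q with rfl | hpq
  · rw [CT_diag, zero_lie]
  rcases eq_or_ne r s with rfl | hrs
  · rw [CT_diag, lie_zero]
  rw [CT_mk, CT_mk, ← mkQ_bracket]
  exact mkQ_rel k N (Or.inl <| Or.inl <| Or.inl <| Or.inr
    ⟨p, q, r, s, α, β, hpq, hpr, hps, hqr, hqs, hrs, rfl⟩)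

lemma rel_c {p q r : Fin n} (hpq : p ≠ q) (hpr : p ≠ r) (hqr : q ≠ r) (α β : ZMod N) :
    ⁅CT k N n p q α, CT k N n p r (α + β) + CT k N n q r β⁆ = 0 := by
  rw [CT_mk, CT_mk, CT_mk, ← mkQ_add, ← mkQ_bracket]
  exact mkQ_rel k N (Or.inl <| Or.inl <| Or.inr ⟨p, q, r, α, β, hpq, hpr, hqr, rfl⟩)

lemma rel_d {p q : Fin n} (hpq : p ≠ q) :
    ⁅CT0 k N n p, CT0 k N n q + tauC k N n p q⁆ = 0 := by
  rw [CT0_mk, CT0_mk, tauC]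
  have : (∑ γ : ZMod N, CT k N n p q γ) = mkQ k N n (∑ γ : ZMod N, cT k N n p q γ) := by
    rw [mkQ_sum]; exact Finset.sum_congr rfl fun γ _ => rfl
  rw [this, ← mkQ_add, ← mkQ_bracket]
  exact mkQ_rel k N (Or.inl <| Or.inr ⟨p, q, hpq, rfl⟩)

lemma rel_e {p q : Fin n} (hpq : p ≠ q) (α : ZMod N) :
    ⁅CT0 k N n p + CT0 k N n q + tauC k N n p q, CT k N n p q α⁆ = 0 := by
  rw [CT0_mk, CT0_mk, tauC, CT_mk]
  have : (∑ γ : ZMod N, CT k N n p q γ) = mkQ k N n (∑ γ : ZMod N, cT k N n p q γ) := by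
    rw [mkQ_sum]; exact Finset.sum_congr rfl fun γ _ => rfl
  rw [this, ← mkQ_add, ← mkQ_add, ← mkQ_bracket]
  exact mkQ_rel k N (Or.inr ⟨p, q, α, hpq, rfl⟩)

end Rels
section Derived

variable {n : ℕ}

lemma lie_zero_symm {L : Type*} [LieRing L] {a b : L} (h : ⁅a, b⁆ = 0) : ⁅b, a⁆ = 0 := by
  rw [← lie_skew, h, neg_zero]

lemma rel_b_tau {p q r : Fin n} (hpq : p ≠ q) (hpr : p ≠ r) :
    ⁅CT0 k N n p, tauC k N n q r⁆ = 0 := by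
  rw [tauC, lie_sum]
  exact Finset.sum_eq_zero fun γ _ => rel_b k N hpq hpr γ

lemma rel_b'_tau1 {p q r s : Fin n} (hpr : p ≠ r) (hps : p ≠ s) (hqr : q ≠ r) (hqs : q ≠ s)
    (β : ZMod N) : ⁅tauC k N n p q, CT k N n r s β⁆ = 0 := by
  rw [tauC, sum_lie]
  exact Finset.sum_eq_zero fun γ _ => rel_b' k N hpr hps hqr hqs γ β

lemma rel_b'_tau {p q r s : Fin n} (hpr : p ≠ r) (hps : p ≠ s) (hqr : q ≠ r) (hqs : q ≠ s) :
    ⁅tauC k N n p q, tauC k N n r s⁆ = 0 := by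
  simp only [tauC]; rw [lie_sum]
  exact Finset.sum_eq_zero fun γ _ => rel_b'_tau1 k N hpr hps hqr hqs γ

lemma rel_c_tau {p q r : Fin n} (hpq : p ≠ q) (hpr : p ≠ r) (hqr : q ≠ r) (α : ZMod N) :
    ⁅CT k N n p q α, tauC k N n p r + tauC k N n q r⁆ = 0 := by
  have h1 : tauC k N n p r = ∑ β : ZMod N, CT k N n p r (α + β) :=
    (Fintype.sum_equiv (Equiv.addLeft α) _ _ fun β => rfl).symm
  rw [h1, tauC, ← Finset.sum_add_distrib, lie_sum]
  exact Finset.sum_eq_zero fun β _ => rel_c k N hpq hpr hqr α β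

lemma rel_c_tautau {p q r : Fin n} (hpq : p ≠ q) (hpr : p ≠ r) (hqr : q ≠ r) :
    ⁅tauC k N n p q, tauC k N n p r + tauC k N n q r⁆ = 0 := by
  simp only [tauC]; rw [sum_lie]
  exact Finset.sum_eq_zero fun α _ => rel_c_tau k N hpq hpr hqr α

lemma rel_e_tau {p q : Fin n} (hpq : p ≠ q) :
    ⁅CT0 k N n p + CT0 k N n q + tauC k N n p q, tauC k N n p q⁆ = 0 := by
  simp only [tauC]; rw [lie_sum]
  exact Finset.sum_eq_zero fun α _ => rel_e k N hpq α

/-- `⁅τ_{rx} + τ_{ry}, t_{xy}^α⁆ = 0` for `r ∉ {x, y}`. -/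
lemma rel_c_tau' {r x y : Fin n} (hxy : x ≠ y) (hrx : r ≠ x) (hry : r ≠ y) (α : ZMod N) :
    ⁅tauC k N n r x + tauC k N n r y, CT k N n x y α⁆ = 0 := by
  have := rel_c_tau k N hxy (Ne.symm hrx) (Ne.symm hry) α
  rw [tauC_symm k N r x, tauC_symm k N r y]
  exact lie_zero_symm this

end Derived
section Sets

variable {n : ℕ}

omit [Field k] [CharZero k] [NeZero N] in
lemma sum_extract {ι M : Type*} [DecidableEq ι] [AddCommMonoid M] {s : Finset ι} {a : ι} (h : a ∈ s)
    (f : ι → M) : ∑ x ∈ s, f x = f a + ∑ x ∈ s.erase a, f x :=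
  (Finset.add_sum_erase s f h).symm

/-- `Σ_{p∈A, q∈B} τ_{pq}`. -/
noncomputable def tauSS (A B : Finset (Fin n)) : Cyc k N n :=
  ∑ p ∈ A, ∑ q ∈ B, tauC k N n p q

/-- The cabled `t_{0A}` (with half coefficient on the symmetric double sum). -/
noncomputable def TT0S (A : Finset (Fin n)) : Cyc k N n :=
  (∑ p ∈ A, CT0 k N n p) + (2⁻¹ : k) • ∑ p ∈ A, ∑ q ∈ A, tauC k N n p q

/-- Key cabling lemma: `⁅t_{0A}, t_{0q} + τ_{Aq}⁆ = 0` for `q ∉ A`. -/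
lemma keyM {A : Finset (Fin n)} {q : Fin n} (h : ∀ p ∈ A, p ≠ q) :
    ⁅TT0S k N A, CT0 k N n q + ∑ p ∈ A, tauC k N n p q⁆ = 0 := by
  rw [TT0S, add_lie, smul_lie]
  have part1 : ⁅∑ p ∈ A, CT0 k N n p, CT0 k N n q + ∑ p ∈ A, tauC k N n p q⁆ = 0 := by
    rw [sum_lie]
    refine Finset.sum_eq_zero fun p hp => ?_
    rw [sum_extract hp (fun x => tauC k N n x q), ← add_assoc]
    rw [lie_add, rel_d k N (h p hp), zero_add, lie_sum]
    exact Finset.sum_eq_zero fun p' hp' =>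
      rel_b_tau k N (Ne.symm (Finset.ne_of_mem_erase hp')) (h p hp)
  have part2 : ⁅∑ p ∈ A, ∑ p' ∈ A, tauC k N n p p',
      CT0 k N n q + ∑ p ∈ A, tauC k N n p q⁆ = 0 := by
    rw [lie_add]
    have h2a : ⁅∑ p ∈ A, ∑ p' ∈ A, tauC k N n p p', CT0 k N n q⁆ = 0 := by
      rw [sum_lie]
      refine Finset.sum_eq_zero fun p hp => ?_
      rw [sum_lie]
      exact Finset.sum_eq_zero fun p' hp' =>
        lie_zero_symm (rel_b_tau k N (Ne.symm (h p hp)) (Ne.symm (h p' hp')))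
    have h2b : ⁅∑ p ∈ A, ∑ p' ∈ A, tauC k N n p p', ∑ p ∈ A, tauC k N n p q⁆ = 0 := by
      rw [sum_lie]
      refine Finset.sum_eq_zero fun p hp => ?_
      rw [sum_lie]
      refine Finset.sum_eq_zero fun p' hp' => ?_
      rcases eq_or_ne p p' with rfl | hpp'
      · rw [tauC_diag, zero_lie]
      have hp'e : p' ∈ A.erase p := Finset.mem_erase.mpr ⟨Ne.symm hpp', hp'⟩
      rw [sum_extract hp (fun x => tauC k N n x q),
        sum_extract hp'e (fun x => tauC k N n x q), ← add_assoc]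
      rw [lie_add, rel_c_tautau k N hpp' (h p hp) (h p' hp'), zero_add, lie_sum]
      refine Finset.sum_eq_zero fun r hr => ?_
      have hr1 : r ≠ p' := Finset.ne_of_mem_erase hr
      have hr2 : r ≠ p := Finset.ne_of_mem_erase (Finset.mem_of_mem_erase hr)
      exact rel_b'_tau k N (Ne.symm hr2) (h p hp) (Ne.symm hr1) (h p' hp')
    rw [h2a, h2b, add_zero]
  rw [part1, part2, smul_zero, add_zero]

/-- `⁅t_{0A}, τ_{qq'}⁆ = 0` when `q, q' ∉ A`. -/
lemma lemD {A : Finset (Fin n)} {q q' : Fin n} (hq : ∀ p ∈ A, p ≠ q)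
    (hq' : ∀ p ∈ A, p ≠ q') : ⁅TT0S k N A, tauC k N n q q'⁆ = 0 := by
  rw [TT0S, add_lie, smul_lie, sum_lie, sum_lie]
  rw [Finset.sum_eq_zero fun p hp => rel_b_tau k N (hq p hp) (hq' p hp)]
  rw [Finset.sum_eq_zero fun p hp => by
    rw [sum_lie]
    exact Finset.sum_eq_zero fun p' hp' =>
      rel_b'_tau k N (hq p hp) (hq' p hp) (hq p' hp') (hq' p' hp')]
  rw [smul_zero, add_zero]

/-- Cabled relation (d): `⁅t_{0A}, t_{0B} + τ_{AB}⁆ = 0` for disjoint `A`, `B`. -/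
lemma lemM {A B : Finset (Fin n)} (hAB : ∀ p ∈ A, ∀ q ∈ B, p ≠ q) :
    ⁅TT0S k N A, TT0S k N B + tauSS k N A B⁆ = 0 := by
  have hre : TT0S k N B + tauSS k N A B
      = (∑ q ∈ B, (CT0 k N n q + ∑ p ∈ A, tauC k N n p q))
        + (2⁻¹ : k) • ∑ p ∈ B, ∑ q ∈ B, tauC k N n p q := by
    rw [TT0S, tauSS]
    rw [show (∑ p ∈ A, ∑ q ∈ B, tauC k N n p q) = ∑ q ∈ B, ∑ p ∈ A, tauC k N n p q from
      Finset.sum_comm]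
    rw [Finset.sum_add_distrib]
    abel
  rw [hre, lie_add, lie_sum]
  rw [Finset.sum_eq_zero fun q hq => keyM k N fun p hp => hAB p hp q hq]
  rw [lie_smul, lie_sum]
  rw [Finset.sum_eq_zero fun q hq => by
    rw [lie_sum]
    exact Finset.sum_eq_zero fun q' hq' =>
      lemD k N (fun p hp => hAB p hp q hq) fun p hp => hAB p hp q' hq']
  rw [smul_zero, add_zero]

/-- The image of relation (d): `A`, `I`, `J` pairwise disjoint. -/
lemma relDImg {A I J : Finset (Fin n)} (hAI : ∀ a ∈ A, ∀ p ∈ I, a ≠ p)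
    (hAJ : ∀ a ∈ A, ∀ q ∈ J, a ≠ q) (hIJ : ∀ p ∈ I, ∀ q ∈ J, p ≠ q) :
    ⁅TT0S k N I + tauSS k N A I, TT0S k N J + tauSS k N A J + tauSS k N I J⁆ = 0 := by
  rw [add_lie]
  have part1 : ⁅TT0S k N I, TT0S k N J + tauSS k N A J + tauSS k N I J⁆ = 0 := by
    rw [show TT0S k N J + tauSS k N A J + tauSS k N I J
        = (TT0S k N J + tauSS k N I J) + tauSS k N A J from by abel]
    rw [lie_add, lemM k N hIJ, zero_add, tauSS, lie_sum]
    refine Finset.sum_eq_zero fun a ha => ?_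
    rw [lie_sum]
    exact Finset.sum_eq_zero fun q hq =>
      lemD k N (fun p hp => Ne.symm (hAI a ha p hp)) fun p hp => hIJ p hp q hq
  have part2 : ⁅tauSS k N A I, TT0S k N J + tauSS k N A J + tauSS k N I J⁆ = 0 := by
    rw [tauSS, sum_lie]
    refine Finset.sum_eq_zero fun a ha => ?_
    rw [sum_lie]
    refine Finset.sum_eq_zero fun p hp => ?_
    rw [lie_add, lie_add]
    have z1 : ⁅tauC k N n a p, TT0S k N J⁆ = 0 :=
      lie_zero_symm (lemD k N (fun q hq => Ne.symm (hAJ a ha q hq))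
        fun q hq => Ne.symm (hIJ p hp q hq))
    have z2 : ⁅tauC k N n a p, tauSS k N A J⁆ + ⁅tauC k N n a p, tauSS k N I J⁆ = 0 := by
      have e1 : tauSS k N A J = (∑ q ∈ J, tauC k N n a q)
          + ∑ a' ∈ A.erase a, ∑ q ∈ J, tauC k N n a' q := by
        rw [tauSS]; exact sum_extract ha (fun a' => ∑ q ∈ J, tauC k N n a' q)
      have e2 : tauSS k N I J = (∑ q ∈ J, tauC k N n p q)
          + ∑ p' ∈ I.erase p, ∑ q ∈ J, tauC k N n p' q := by
        rw [tauSS]; exact sum_extract hp (fun p' => ∑ q ∈ J, tauC k N n p' q)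
      rw [← lie_add, e1, e2,
        show ((∑ q ∈ J, tauC k N n a q) + ∑ a' ∈ A.erase a, ∑ q ∈ J, tauC k N n a' q)
            + ((∑ q ∈ J, tauC k N n p q) + ∑ p' ∈ I.erase p, ∑ q ∈ J, tauC k N n p' q)
          = (∑ q ∈ J, (tauC k N n a q + tauC k N n p q))
            + ((∑ a' ∈ A.erase a, ∑ q ∈ J, tauC k N n a' q)
              + ∑ p' ∈ I.erase p, ∑ q ∈ J, tauC k N n p' q) from by
          rw [Finset.sum_add_distrib]; abel]
      rw [lie_add, lie_add, lie_sum]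
      have hap : a ≠ p := hAI a ha p hp
      rw [Finset.sum_eq_zero fun q hq =>
        rel_c_tautau k N hap (hAJ a ha q hq) (hIJ p hp q hq)]
      rw [lie_sum, Finset.sum_eq_zero fun a' ha' => by
        rw [lie_sum]
        exact Finset.sum_eq_zero fun q hq =>
          rel_b'_tau k N (Ne.symm (Finset.ne_of_mem_erase ha')) (hAJ a ha q hq)
            (Ne.symm (hAI a' (Finset.mem_of_mem_erase ha') p hp))
            (hIJ p hp q hq)]
      rw [lie_sum, Finset.sum_eq_zero fun p' hp' => by
        rw [lie_sum]
        exact Finset.sum_eq_zero fun q hq =>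
          rel_b'_tau k N (hAI a ha p' (Finset.mem_of_mem_erase hp')) (hAJ a ha q hq)
            (Ne.symm (Finset.ne_of_mem_erase hp')) (hIJ p hp q hq)]
      simp
    rw [z1, zero_add]
    exact z2
  rw [part1, part2, add_zero]

end Sets
section KeyE

variable {n : ℕ}

lemma tauSS_symm (I J : Finset (Fin n)) : tauSS k N J I = tauSS k N I J := by
  rw [tauSS, Finset.sum_comm, tauSS]
  exact Finset.sum_congr rfl fun p _ => Finset.sum_congr rfl fun q _ => tauC_symm k N q p

lemma half_two (w : Cyc k N n) : (2⁻¹ : k) • (w + w) = w := by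
  rw [← two_smul k, smul_smul]
  norm_num

/-- Cabled relation (e) core: `⁅t_{0B}, t_{xy}^α⁆ = 0` for `x, y ∈ B` distinct. -/
lemma keyE {B : Finset (Fin n)} {x y : Fin n} (hx : x ∈ B) (hy : y ∈ B) (hxy : x ≠ y)
    (α : ZMod N) : ⁅TT0S k N B, CT k N n x y α⁆ = 0 := by
  have hyx : y ∈ B.erase x := Finset.mem_erase.mpr ⟨Ne.symm hxy, hy⟩
  have hRy : ∀ p ∈ (B.erase x).erase y, p ≠ y := fun p hp => Finset.ne_of_mem_erase hp
  have hRx : ∀ p ∈ (B.erase x).erase y, p ≠ x := fun p hp =>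
    Finset.ne_of_mem_erase (Finset.mem_of_mem_erase hp)
  have row : ∀ p : Fin n, ⁅∑ q ∈ B, tauC k N n p q, CT k N n x y α⁆
      = ⁅tauC k N n p x, CT k N n x y α⁆ + ⁅tauC k N n p y, CT k N n x y α⁆
        + ∑ q ∈ (B.erase x).erase y, ⁅tauC k N n p q, CT k N n x y α⁆ := by
    intro p
    rw [sum_lie, sum_extract hx (fun q => ⁅tauC k N n p q, CT k N n x y α⁆),
      sum_extract hyx (fun q => ⁅tauC k N n p q, CT k N n x y α⁆), ← add_assoc]
  have hrest0 : (∑ p ∈ (B.erase x).erase y,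
      ⁅∑ q ∈ B, tauC k N n p q, CT k N n x y α⁆) = 0 := by
    refine Finset.sum_eq_zero fun p hp => ?_
    rw [row p, ← add_lie, rel_c_tau' k N hxy (hRx p hp) (hRy p hp) α, zero_add]
    exact Finset.sum_eq_zero fun q hq =>
      rel_b'_tau1 k N (hRx p hp) (hRy p hp) (hRx q hq) (hRy q hq) α
  have hsum : (∑ q ∈ (B.erase x).erase y, ⁅tauC k N n x q, CT k N n x y α⁆)
      + ∑ q ∈ (B.erase x).erase y, ⁅tauC k N n y q, CT k N n x y α⁆ = 0 := by
    rw [← Finset.sum_add_distrib]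
    refine Finset.sum_eq_zero fun q hq => ?_
    rw [← add_lie, tauC_symm k N x q, tauC_symm k N y q]
    exact rel_c_tau' k N hxy (hRx q hq) (hRy q hq) α
  have hD : ⁅∑ p ∈ B, ∑ q ∈ B, tauC k N n p q, CT k N n x y α⁆
      = (2 : k) • ⁅tauC k N n x y, CT k N n x y α⁆ := by
    rw [sum_lie, sum_extract hx (fun p => ⁅∑ q ∈ B, tauC k N n p q, CT k N n x y α⁆),
      sum_extract hyx (fun p => ⁅∑ q ∈ B, tauC k N n p q, CT k N n x y α⁆),
      hrest0, add_zero, row x, row y, tauC_diag, tauC_diag, zero_lie,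
      tauC_symm k N y x, zero_add, add_zero, two_smul k]
    calc (⁅tauC k N n x y, CT k N n x y α⁆
            + ∑ q ∈ (B.erase x).erase y, ⁅tauC k N n x q, CT k N n x y α⁆)
          + (⁅tauC k N n x y, CT k N n x y α⁆
            + ∑ q ∈ (B.erase x).erase y, ⁅tauC k N n y q, CT k N n x y α⁆)
        = (⁅tauC k N n x y, CT k N n x y α⁆ + ⁅tauC k N n x y, CT k N n x y α⁆)
          + ((∑ q ∈ (B.erase x).erase y, ⁅tauC k N n x q, CT k N n x y α⁆)
            + ∑ q ∈ (B.erase x).erase y, ⁅tauC k N n y q, CT k N n x y α⁆) := by abel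
      _ = ⁅tauC k N n x y, CT k N n x y α⁆ + ⁅tauC k N n x y, CT k N n x y α⁆ := by
          rw [hsum, add_zero]
  rw [TT0S, add_lie, smul_lie, hD, smul_smul,
    show (2⁻¹ * 2 : k) = 1 from by norm_num, one_smul]
  rw [sum_lie, sum_extract hx (fun p => ⁅CT0 k N n p, CT k N n x y α⁆),
    sum_extract hyx (fun p => ⁅CT0 k N n p, CT k N n x y α⁆)]
  rw [Finset.sum_eq_zero (fun p hp => rel_b k N (hRx p hp) (hRy p hp) α), add_zero]
  rw [show ⁅CT0 k N n x, CT k N n x y α⁆ + ⁅CT0 k N n y, CT k N n x y α⁆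
        + ⁅tauC k N n x y, CT k N n x y α⁆
      = ⁅CT0 k N n x + CT0 k N n y + tauC k N n x y, CT k N n x y α⁆ from by
    rw [add_lie, add_lie]]
  exact rel_e k N hxy α

lemma disj_finset {I J : Finset (Fin n)} (hIJ : ∀ p ∈ I, ∀ q ∈ J, p ≠ q) : Disjoint I J :=
  Finset.disjoint_left.mpr fun {a} ha ha' => (hIJ a ha a ha' rfl).elim

lemma TT0S_union {I J : Finset (Fin n)} (hIJ : ∀ p ∈ I, ∀ q ∈ J, p ≠ q) :
    TT0S k N (I ∪ J) = TT0S k N I + TT0S k N J + tauSS k N I J := by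
  have hd := disj_finset hIJ
  have hdouble : (∑ p ∈ I ∪ J, ∑ q ∈ I ∪ J, tauC k N n p q)
      = ((∑ p ∈ I, ∑ q ∈ I, tauC k N n p q) + ∑ p ∈ J, ∑ q ∈ J, tauC k N n p q)
        + (tauSS k N I J + tauSS k N I J) := by
    rw [Finset.sum_union hd]
    rw [Finset.sum_congr rfl fun p (_ : p ∈ I) => Finset.sum_union hd
      (f := fun q => tauC k N n p q)]
    rw [Finset.sum_congr rfl fun p (_ : p ∈ J) => Finset.sum_union hd
      (f := fun q => tauC k N n p q)]
    rw [Finset.sum_add_distrib, Finset.sum_add_distrib]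
    rw [show (∑ p ∈ J, ∑ q ∈ I, tauC k N n p q) = tauSS k N I J from tauSS_symm k N I J]
    rw [tauSS]
    abel
  rw [TT0S, Finset.sum_union hd, hdouble, TT0S, TT0S, smul_add, smul_add, half_two]
  abel

lemma tauSS_union_right {A I J : Finset (Fin n)} (hIJ : ∀ p ∈ I, ∀ q ∈ J, p ≠ q) :
    tauSS k N A (I ∪ J) = tauSS k N A I + tauSS k N A J := by
  have hd := disj_finset hIJ
  rw [tauSS, tauSS, tauSS, ← Finset.sum_add_distrib]
  exact Finset.sum_congr rfl fun a _ => Finset.sum_union hd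

/-- The image of relation (e). -/
lemma relEImg {A I J : Finset (Fin n)} (hAI : ∀ a ∈ A, ∀ p ∈ I, a ≠ p)
    (hAJ : ∀ a ∈ A, ∀ q ∈ J, a ≠ q) (hIJ : ∀ p ∈ I, ∀ q ∈ J, p ≠ q) (α : ZMod N) :
    ⁅TT0S k N I + tauSS k N A I + (TT0S k N J + tauSS k N A J) + tauSS k N I J,
      ∑ x ∈ I, ∑ y ∈ J, CT k N n x y α⁆ = 0 := by
  have hW : TT0S k N I + tauSS k N A I + (TT0S k N J + tauSS k N A J) + tauSS k N I J
      = TT0S k N (I ∪ J) + tauSS k N A (I ∪ J) := by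
    rw [TT0S_union k N hIJ, tauSS_union_right k N hIJ]
    abel
  rw [hW, lie_sum]
  refine Finset.sum_eq_zero fun x hxI => ?_
  rw [lie_sum]
  refine Finset.sum_eq_zero fun y hyJ => ?_
  have hxy : x ≠ y := hIJ x hxI y hyJ
  have hxU : x ∈ I ∪ J := Finset.mem_union_left _ hxI
  have hyU : y ∈ I ∪ J := Finset.mem_union_right _ hyJ
  rw [add_lie, keyE k N hxU hyU hxy α, zero_add]
  rw [tauSS, sum_lie]
  refine Finset.sum_eq_zero fun a ha => ?_
  have hax : a ≠ x := hAI a ha x hxI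
  have hay : a ≠ y := hAJ a ha y hyJ
  have hyx : y ∈ (I ∪ J).erase x := Finset.mem_erase.mpr ⟨Ne.symm hxy, hyU⟩
  rw [sum_lie, sum_extract hxU (fun q => ⁅tauC k N n a q, CT k N n x y α⁆),
    sum_extract hyx (fun q => ⁅tauC k N n a q, CT k N n x y α⁆), ← add_assoc]
  rw [← add_lie, rel_c_tau' k N hxy hax hay α, zero_add]
  refine Finset.sum_eq_zero fun q hq => ?_
  have hqy : q ≠ y := Finset.ne_of_mem_erase hq
  have hqx : q ≠ x := Finset.ne_of_mem_erase (Finset.mem_of_mem_erase hq)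
  exact rel_b'_tau1 k N hax hay hqx hqy α

end KeyE
section EasyImgs

variable {n : ℕ}

/-- Image of relation (a). -/
lemma relAImg {I J : Finset (Fin n)} (hIJ : ∀ p ∈ I, ∀ q ∈ J, p ≠ q) (α : ZMod N) :
    (∑ x ∈ I, ∑ y ∈ J, CT k N n x y α) = ∑ x ∈ J, ∑ y ∈ I, CT k N n x y (-α) := by
  rw [show (∑ x ∈ J, ∑ y ∈ I, CT k N n x y (-α))
      = ∑ y ∈ I, ∑ x ∈ J, CT k N n x y (-α) from Finset.sum_comm]
  exact Finset.sum_congr rfl fun x hx => Finset.sum_congr rfl fun y hy =>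
    CT_symm k N (hIJ x hx y hy) α

lemma TT0S_CT_zero {B : Finset (Fin n)} {x y : Fin n} (hBx : ∀ p ∈ B, p ≠ x)
    (hBy : ∀ p ∈ B, p ≠ y) (α : ZMod N) : ⁅TT0S k N B, CT k N n x y α⁆ = 0 := by
  rw [TT0S, add_lie, smul_lie, sum_lie, sum_lie]
  rw [Finset.sum_eq_zero fun p hp => rel_b k N (hBx p hp) (hBy p hp) α]
  rw [Finset.sum_eq_zero fun p hp => by
    rw [sum_lie]
    exact Finset.sum_eq_zero fun q hq =>
      rel_b'_tau1 k N (hBx p hp) (hBy p hp) (hBx q hq) (hBy q hq) α]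
  rw [smul_zero, add_zero]

/-- Image of relation (b). -/
lemma relBImg {A I J L : Finset (Fin n)} (hIJ : ∀ p ∈ I, ∀ q ∈ J, p ≠ q)
    (hIL : ∀ p ∈ I, ∀ q ∈ L, p ≠ q) (hAJ : ∀ p ∈ A, ∀ q ∈ J, p ≠ q)
    (hAL : ∀ p ∈ A, ∀ q ∈ L, p ≠ q) (α : ZMod N) :
    ⁅TT0S k N I + tauSS k N A I, ∑ x ∈ J, ∑ y ∈ L, CT k N n x y α⁆ = 0 := by
  rw [lie_sum]
  refine Finset.sum_eq_zero fun x hx => ?_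
  rw [lie_sum]
  refine Finset.sum_eq_zero fun y hy => ?_
  rw [add_lie, TT0S_CT_zero k N (fun p hp => hIJ p hp x hx) (fun p hp => hIL p hp y hy) α,
    zero_add, tauSS, sum_lie]
  refine Finset.sum_eq_zero fun a ha => ?_
  rw [sum_lie]
  exact Finset.sum_eq_zero fun p hp =>
    rel_b'_tau1 k N (hAJ a ha x hx) (hAL a ha y hy) (hIJ p hp x hx) (hIL p hp y hy) α

/-- Image of relation (b'). -/
lemma relB'Img {I J L M : Finset (Fin n)} (hIL : ∀ p ∈ I, ∀ q ∈ L, p ≠ q)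
    (hIM : ∀ p ∈ I, ∀ q ∈ M, p ≠ q) (hJL : ∀ p ∈ J, ∀ q ∈ L, p ≠ q)
    (hJM : ∀ p ∈ J, ∀ q ∈ M, p ≠ q) (α β : ZMod N) :
    ⁅∑ x ∈ I, ∑ y ∈ J, CT k N n x y α, ∑ z ∈ L, ∑ w ∈ M, CT k N n z w β⁆ = 0 := by
  rw [sum_lie]
  refine Finset.sum_eq_zero fun x hx => ?_
  rw [sum_lie]
  refine Finset.sum_eq_zero fun y hy => ?_
  rw [lie_sum]
  refine Finset.sum_eq_zero fun z hz => ?_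
  rw [lie_sum]
  refine Finset.sum_eq_zero fun w hw => ?_
  exact rel_b' k N (hIL x hx z hz) (hIM x hx w hw) (hJL y hy z hz) (hJM y hy w hw) α β

/-- Image of relation (c). -/
lemma relCImg {I J L : Finset (Fin n)} (hIJ : ∀ p ∈ I, ∀ q ∈ J, p ≠ q)
    (hIL : ∀ p ∈ I, ∀ q ∈ L, p ≠ q) (hJL : ∀ p ∈ J, ∀ q ∈ L, p ≠ q) (α β : ZMod N) :
    ⁅∑ x ∈ I, ∑ y ∈ J, CT k N n x y α,
      (∑ x ∈ I, ∑ z ∈ L, CT k N n x z (α + β)) + ∑ y ∈ J, ∑ z ∈ L, CT k N n y z β⁆ = 0 := by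
  rw [sum_lie]
  refine Finset.sum_eq_zero fun x hx => ?_
  rw [sum_lie]
  refine Finset.sum_eq_zero fun y hy => ?_
  rw [sum_extract hx (fun x' => ∑ z ∈ L, CT k N n x' z (α + β)),
    sum_extract hy (fun y' => ∑ z ∈ L, CT k N n y' z β)]
  rw [show (∑ z ∈ L, CT k N n x z (α + β)) + (∑ x' ∈ I.erase x, ∑ z ∈ L, CT k N n x' z (α + β))
      + ((∑ z ∈ L, CT k N n y z β) + ∑ y' ∈ J.erase y, ∑ z ∈ L, CT k N n y' z β)
    = (∑ z ∈ L, (CT k N n x z (α + β) + CT k N n y z β))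
      + ((∑ x' ∈ I.erase x, ∑ z ∈ L, CT k N n x' z (α + β))
        + ∑ y' ∈ J.erase y, ∑ z ∈ L, CT k N n y' z β) from by
    rw [Finset.sum_add_distrib]; abel]
  rw [lie_add, lie_add, lie_sum]
  rw [Finset.sum_eq_zero fun z hz =>
    rel_c k N (hIJ x hx y hy) (hIL x hx z hz) (hJL y hy z hz) α β]
  rw [lie_sum, Finset.sum_eq_zero fun x' hx' => by
    rw [lie_sum]
    exact Finset.sum_eq_zero fun z hz =>
      rel_b' k N (Ne.symm (Finset.ne_of_mem_erase hx')) (hIL x hx z hz)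
        (Ne.symm (hIJ x' (Finset.mem_of_mem_erase hx') y hy)) (hJL y hy z hz) α (α + β)]
  rw [lie_sum, Finset.sum_eq_zero fun y' hy' => by
    rw [lie_sum]
    exact Finset.sum_eq_zero fun z hz =>
      rel_b' k N (hIJ x hx y' (Finset.mem_of_mem_erase hy')) (hIL x hx z hz)
        (Ne.symm (Finset.ne_of_mem_erase hy')) (hJL y hy z hz) α β]
  simp

/-- Conversion between the `j < l` pair sum and the halved symmetric double sum. -/
lemma halfPairs (S : Finset (Fin n)) :
    (∑ j ∈ S, ∑ l ∈ S.filter (fun l => j < l), tauC k N n j l)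
      = (2⁻¹ : k) • ∑ j ∈ S, ∑ l ∈ S, tauC k N n j l := by
  have flip : (∑ j ∈ S, ∑ l ∈ S.filter (fun l => l < j), tauC k N n j l)
      = ∑ j ∈ S, ∑ l ∈ S.filter (fun l => j < l), tauC k N n j l := by
    calc (∑ j ∈ S, ∑ l ∈ S.filter (fun l => l < j), tauC k N n j l)
        = ∑ j ∈ S, ∑ l ∈ S, if l < j then tauC k N n j l else 0 :=
          Finset.sum_congr rfl fun j _ => Finset.sum_filter _ _
      _ = ∑ l ∈ S, ∑ j ∈ S, if l < j then tauC k N n j l else 0 := Finset.sum_comm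
      _ = ∑ a ∈ S, ∑ b ∈ S, if a < b then tauC k N n a b else 0 :=
          Finset.sum_congr rfl fun a _ => Finset.sum_congr rfl fun b _ => by
            by_cases h : a < b
            · rw [if_pos h, if_pos h, tauC_symm k N b a]
            · rw [if_neg h, if_neg h]
      _ = ∑ j ∈ S, ∑ l ∈ S.filter (fun l => j < l), tauC k N n j l :=
          Finset.sum_congr rfl fun j _ => (Finset.sum_filter _ _).symm
  have hD : (∑ j ∈ S, ∑ l ∈ S, tauC k N n j l)
      = (∑ j ∈ S, ∑ l ∈ S.filter (fun l => j < l), tauC k N n j l)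
        + ∑ j ∈ S, ∑ l ∈ S.filter (fun l => j < l), tauC k N n j l := by
    calc (∑ j ∈ S, ∑ l ∈ S, tauC k N n j l)
        = ∑ j ∈ S, ((∑ l ∈ S.filter (fun l => j < l), tauC k N n j l)
            + ∑ l ∈ S.filter (fun l => ¬ j < l), tauC k N n j l) :=
          Finset.sum_congr rfl fun j _ =>
            (Finset.sum_filter_add_sum_filter_not S (fun l => j < l) _).symm
      _ = (∑ j ∈ S, ∑ l ∈ S.filter (fun l => j < l), tauC k N n j l)
            + ∑ j ∈ S, ∑ l ∈ S.filter (fun l => ¬ j < l), tauC k N n j l :=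
          Finset.sum_add_distrib
      _ = (∑ j ∈ S, ∑ l ∈ S.filter (fun l => j < l), tauC k N n j l)
            + ∑ j ∈ S, ∑ l ∈ S.filter (fun l => l < j), tauC k N n j l := by
          congr 1
          refine Finset.sum_congr rfl fun j _ => ?_
          refine (Finset.sum_subset (fun l hl => ?_) fun l hl hl' => ?_).symm
          · rw [Finset.mem_filter] at hl ⊢
            exact ⟨hl.1, not_lt_of_gt hl.2⟩
          · rw [Finset.mem_filter] at hl
            rw [Finset.mem_filter] at hl'
            have : l = j := le_antisymm (le_of_not_gt hl.2) (le_of_not_gt fun h => hl' ⟨hl.1, h⟩)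
            rw [this, tauC_diag]
      _ = (∑ j ∈ S, ∑ l ∈ S.filter (fun l => j < l), tauC k N n j l)
            + ∑ j ∈ S, ∑ l ∈ S.filter (fun l => j < l), tauC k N n j l := by rw [flip]
  rw [hD, half_two]

end EasyImgs
section Assembly

lemma tauC_def {n : ℕ} (p q : Fin n) :
    tauC k N n p q = ∑ γ : ZMod N, CT k N n p q γ := rfl

lemma lieHom_sum {L₁ L₂ : Type} [LieRing L₁] [LieAlgebra k L₁] [LieRing L₂] [LieAlgebra k L₂]
    (F : L₁ →ₗ⁅k⁆ L₂) {ι : Type*} (s : Finset ι) (g : ι → L₁) :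
    F (∑ i ∈ s, g i) = ∑ i ∈ s, F (g i) := by
  rw [← LieHom.coe_toLinearMap]
  exact map_sum F.toLinearMap g s

lemma lieHom_sub {L₁ L₂ : Type} [LieRing L₁] [LieAlgebra k L₁] [LieRing L₂] [LieAlgebra k L₂]
    (F : L₁ →ₗ⁅k⁆ L₂) (x y : L₁) : F (x - y) = F x - F y := by
  rw [← LieHom.coe_toLinearMap]
  exact map_sub F.toLinearMap x y

end Assembly

theorem cyclotomic_insertion_coproduct' (n m : ℕ)
    (f : Fin (m + 1) → Option (Fin (n + 1))) (hf : f 0 = some 0) :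
    ∃! φ : Cyc k N n →ₗ⁅k⁆ Cyc k N m,
      (∀ i j : Fin n, i ≠ j → ∀ α : ZMod N,
        φ (CT k N n i j α) =
          ∑ x ∈ Finset.univ.filter (fun x : Fin m => f x.succ = some i.succ),
            ∑ y ∈ Finset.univ.filter (fun y : Fin m => f y.succ = some j.succ),
              CT k N m x y α) ∧
      (∀ i : Fin n,
        φ (CT0 k N n i) =
          (∑ j ∈ Finset.univ.filter (fun j : Fin m => f j.succ = some i.succ),
            CT0 k N m j) +
          (∑ j ∈ Finset.univ.filter (fun j : Fin m => f j.succ = some i.succ),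
            ∑ l ∈ (Finset.univ.filter (fun l : Fin m => f l.succ = some i.succ)).filter
              (fun l => j < l),
              ∑ γ : ZMod N, CT k N m j l γ) +
          (∑ j ∈ Finset.univ.filter (fun j : Fin m => f j.succ = some 0),
            ∑ l ∈ Finset.univ.filter (fun l : Fin m => f l.succ = some i.succ),
              ∑ γ : ZMod N, CT k N m j l γ)) := by
  classical
  -- fibers
  set S : Fin (n + 1) → Finset (Fin m) :=
    fun i => Finset.univ.filter (fun x : Fin m => f x.succ = some i) with hS
  -- disjointness of fibers
  have hdisj : ∀ {i j : Fin (n + 1)}, i ≠ j → ∀ p ∈ S i, ∀ q ∈ S j, p ≠ q := by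
    intro i j hij p hp q hq hpq
    rw [hS, Finset.mem_filter] at hp hq
    subst hpq
    rw [hp.2] at hq
    exact hij (Option.some_injective _ hq.2)
  have hsne : ∀ i : Fin n, (i.succ : Fin (n + 1)) ≠ 0 := fun i => Fin.succ_ne_zero i
  have hij_succ : ∀ {i j : Fin n}, i ≠ j → (i.succ : Fin (n + 1)) ≠ j.succ :=
    fun h => fun hc => h (Fin.succ_injective _ hc)
  -- the target values of the generators
  set g : CGen N n → Cyc k N m := fun c =>
    match c with
    | Sum.inl i =>
        (∑ j ∈ S i.succ, CT0 k N m j) +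
          (∑ j ∈ S i.succ, ∑ l ∈ (S i.succ).filter (fun l => j < l),
            ∑ γ : ZMod N, CT k N m j l γ) +
          (∑ j ∈ S 0, ∑ l ∈ S i.succ, ∑ γ : ZMod N, CT k N m j l γ)
    | Sum.inr (⟨(i, j), _⟩, α) => ∑ x ∈ S i.succ, ∑ y ∈ S j.succ, CT k N m x y α
    with hg
  set F : FreeLieAlgebra k (CGen N n) →ₗ⁅k⁆ Cyc k N m := FreeLieAlgebra.lift k g with hF
  have hF0 : ∀ i : Fin n, F (cT0 k N n i) = g (Sum.inl i) := fun i =>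
    FreeLieAlgebra.lift_of_apply g (Sum.inl i)
  have hFt : ∀ (i j : Fin n) (hij : i ≠ j) (α : ZMod N),
      F (cT k N n i j α) = ∑ x ∈ S i.succ, ∑ y ∈ S j.succ, CT k N m x y α := by
    intro i j hij α
    rw [cT, dif_pos hij]
    exact FreeLieAlgebra.lift_of_apply g (Sum.inr (⟨(i, j), hij⟩, α))
  -- reformulation of the `t_{0i}` images
  have hgform : ∀ i : Fin n,
      g (Sum.inl i) = TT0S k N (S i.succ) + tauSS k N (S 0) (S i.succ) := by
    intro i
    show (∑ j ∈ S i.succ, CT0 k N m j) +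
          (∑ j ∈ S i.succ, ∑ l ∈ (S i.succ).filter (fun l => j < l),
            ∑ γ : ZMod N, CT k N m j l γ) +
          (∑ j ∈ S 0, ∑ l ∈ S i.succ, ∑ γ : ZMod N, CT k N m j l γ)
        = TT0S k N (S i.succ) + tauSS k N (S 0) (S i.succ)
    simp only [← tauC_def]
    rw [halfPairs, TT0S, tauSS]
  -- sum over α of the `t_{ij}^α` images
  have hFtau : ∀ (i j : Fin n) (hij : i ≠ j),
      F (∑ α : ZMod N, cT k N n i j α) = tauSS k N (S i.succ) (S j.succ) := by
    intro i j hij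
    rw [lieHom_sum k F]
    rw [Finset.sum_congr rfl fun α _ => hFt i j hij α]
    rw [show (∑ α : ZMod N, ∑ x ∈ S i.succ, ∑ y ∈ S j.succ, CT k N m x y α)
        = ∑ x ∈ S i.succ, ∑ α : ZMod N, ∑ y ∈ S j.succ, CT k N m x y α from Finset.sum_comm]
    rw [tauSS]
    refine Finset.sum_congr rfl fun x _ => ?_
    rw [show (∑ α : ZMod N, ∑ y ∈ S j.succ, CT k N m x y α)
        = ∑ y ∈ S j.succ, ∑ α : ZMod N, CT k N m x y α from Finset.sum_comm]
    exact Finset.sum_congr rfl fun y _ => (tauC_def k N x y).symm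
  -- all relations are sent to zero
  have hKer : ∀ x ∈ CRels k N n, F x = 0 := by
    rintro x (((((⟨i, j, α, hij, rfl⟩ | ⟨i, j, l, α, hij, hil, hjl, rfl⟩) |
      ⟨i, j, l, o, α, β, hij, hil, hio, hjl, hjo, hlo, rfl⟩) |
      ⟨i, j, l, α, β, hij, hil, hjl, rfl⟩) | ⟨i, j, hij, rfl⟩) | ⟨i, j, α, hij, rfl⟩)
    · rw [lieHom_sub k F, hFt i j hij α, hFt j i (Ne.symm hij) (-α), sub_eq_zero]
      exact relAImg k N (hdisj (hij_succ hij)) α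
    · rw [LieHom.map_lie, hF0 i, hFt j l hjl α, hgform i]
      exact relBImg k N (hdisj (hij_succ hij)) (hdisj (hij_succ hil))
        (hdisj (Ne.symm (hsne j))) (hdisj (Ne.symm (hsne l))) α
    · rw [LieHom.map_lie, hFt i j hij α, hFt l o hlo β]
      exact relB'Img k N (hdisj (hij_succ hil)) (hdisj (hij_succ hio))
        (hdisj (hij_succ hjl)) (hdisj (hij_succ hjo)) α β
    · rw [LieHom.map_lie, map_add, hFt i j hij α, hFt i l hil (α + β), hFt j l hjl β]
      exact relCImg k N (hdisj (hij_succ hij)) (hdisj (hij_succ hil))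
        (hdisj (hij_succ hjl)) α β
    · rw [LieHom.map_lie, map_add, hF0 i, hF0 j, hgform i, hgform j, hFtau i j hij]
      exact relDImg k N (hdisj (Ne.symm (hsne i))) (hdisj (Ne.symm (hsne j)))
        (hdisj (hij_succ hij))
    · rw [LieHom.map_lie, map_add, map_add, hF0 i, hF0 j, hgform i, hgform j,
        hFtau i j hij, hFt i j hij α]
      exact relEImg k N (hdisj (Ne.symm (hsne i))) (hdisj (Ne.symm (hsne j)))
        (hdisj (hij_succ hij)) α
  -- the ideal is contained in the kernel
  have hker' : (CIdeal k N n).toSubmodule ≤ LinearMap.ker F.toLinearMap := by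
    intro x hx
    have : CIdeal k N n ≤ F.ker :=
      (LieSubmodule.lieSpan_le).mpr fun y hy => LieHom.mem_ker.mpr (hKer y hy)
    exact LieHom.mem_ker.mp (this hx)
  -- construct the morphism
  let φL : Cyc k N n →ₗ[k] Cyc k N m :=
    Submodule.liftQ (CIdeal k N n).toSubmodule F.toLinearMap hker'
  have hφL : ∀ x : FreeLieAlgebra k (CGen N n), φL (mkQ k N n x) = F x := fun x => rfl
  let φ : Cyc k N n →ₗ⁅k⁆ Cyc k N m :=
    { φL with
      map_lie' := by
        intro x y
        obtain ⟨a, rfl⟩ := LieSubmodule.Quotient.surjective_mk' (CIdeal k N n) x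
        obtain ⟨b, rfl⟩ := LieSubmodule.Quotient.surjective_mk' (CIdeal k N n) y
        show φL ⁅mkQ k N n a, mkQ k N n b⁆ = ⁅φL (mkQ k N n a), φL (mkQ k N n b)⁆
        rw [← mkQ_bracket, hφL, hφL, hφL, LieHom.map_lie] }
  have hφ : ∀ x : FreeLieAlgebra k (CGen N n), φ (mkQ k N n x) = F x := fun x => rfl
  -- the quotient map as a Lie algebra morphism
  let π : FreeLieAlgebra k (CGen N n) →ₗ⁅k⁆ Cyc k N n :=
    { toFun := mkQ k N n
      map_add' := mkQ_add k N
      map_smul' := fun t x => Submodule.Quotient.mk_smul _ t x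
      map_lie' := by intro x y; exact mkQ_bracket k N x y }
  have hprop1 : ∀ i j : Fin n, i ≠ j → ∀ α : ZMod N,
      φ (CT k N n i j α) =
        ∑ x ∈ Finset.univ.filter (fun x : Fin m => f x.succ = some i.succ),
          ∑ y ∈ Finset.univ.filter (fun y : Fin m => f y.succ = some j.succ),
            CT k N m x y α := by
    intro i j hij α
    rw [CT_mk, hφ, hFt i j hij α]
  have hprop2 : ∀ i : Fin n,
      φ (CT0 k N n i) =
        (∑ j ∈ Finset.univ.filter (fun j : Fin m => f j.succ = some i.succ),
          CT0 k N m j) +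
        (∑ j ∈ Finset.univ.filter (fun j : Fin m => f j.succ = some i.succ),
          ∑ l ∈ (Finset.univ.filter (fun l : Fin m => f l.succ = some i.succ)).filter
            (fun l => j < l),
            ∑ γ : ZMod N, CT k N m j l γ) +
        (∑ j ∈ Finset.univ.filter (fun j : Fin m => f j.succ = some 0),
          ∑ l ∈ Finset.univ.filter (fun l : Fin m => f l.succ = some i.succ),
            ∑ γ : ZMod N, CT k N m j l γ) := by
    intro i
    rw [CT0_mk, hφ, hF0 i]
  refine ⟨φ, ⟨hprop1, hprop2⟩, ?_⟩
  rintro ψ ⟨hψ1, hψ2⟩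
  have hcomp : ψ.comp π = φ.comp π := by
    apply FreeLieAlgebra.hom_ext
    rintro (i | ⟨⟨⟨i, j⟩, hij⟩, α⟩)
    · show ψ (mkQ k N n (FreeLieAlgebra.of k (Sum.inl i)))
        = φ (mkQ k N n (FreeLieAlgebra.of k (Sum.inl i)))
      rw [show mkQ k N n (FreeLieAlgebra.of k (Sum.inl i)) = CT0 k N n i from rfl]
      rw [hψ2 i, hprop2 i]
    · show ψ (mkQ k N n (FreeLieAlgebra.of k (Sum.inr (⟨(i, j), hij⟩, α))))
        = φ (mkQ k N n (FreeLieAlgebra.of k (Sum.inr (⟨(i, j), hij⟩, α))))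
      have hoc : FreeLieAlgebra.of k (Sum.inr (⟨(i, j), hij⟩, α) : CGen N n)
          = cT k N n i j α := by
        unfold cT
        exact (dif_pos (show i ≠ j from hij)
          (t := fun h => FreeLieAlgebra.of k (Sum.inr (⟨(i, j), h⟩, α) : CGen N n))
          (e := fun _ => 0)).symm
      rw [show mkQ k N n (FreeLieAlgebra.of k (Sum.inr (⟨(i, j), hij⟩, α)))
          = CT k N n i j α from (congrArg (mkQ k N n) hoc).trans rfl]
      rw [hψ1 i j hij α, hprop1 i j hij α]
  apply LieHom.ext
  intro x
  obtain ⟨a, rfl⟩ := LieSubmodule.Quotient.surjective_mk' (CIdeal k N n) x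
  exact DFunLike.congr_fun hcomp a

/-- Let `f` be a doubly pointed partially defined map from
`{0, 1, …, m}` to `{0, 1, …, n}`, i.e. `f : Fin (m+1) → Option (Fin (n+1))` with
`f 0 = some 0` (here the strand `i ∈ {1, …, n}` corresponds to `(i−1).succ : Fin (n+1)`,
and `0 : Fin (n+1)` is the frozen strand).  Then there is a unique Lie algebra morphism
`(−)^f : 𝔱_n^Γ → 𝔱_m^Γ` with
`(t_{ij}^α)^f = Σ_{x ∈ f⁻¹(i)} Σ_{y ∈ f⁻¹(j)} t_{xy}^α` and
`(t_{0i})^f = Σ_{j ∈ f⁻¹(i)} t_{0j} + Σ_{j < l ∈ f⁻¹(i)} Σ_γ t_{jl}^γ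
  + Σ_{j ∈ f⁻¹(0)∖{0}} Σ_{l ∈ f⁻¹(i)} Σ_γ t_{jl}^γ`. -/
theorem cyclotomic_insertion_coproduct (n m : ℕ)
    (f : Fin (m + 1) → Option (Fin (n + 1))) (hf : f 0 = some 0) :
    ∃! φ : Cyc k N n →ₗ⁅k⁆ Cyc k N m,
      (∀ i j : Fin n, i ≠ j → ∀ α : ZMod N,
        φ (CT k N n i j α) =
          ∑ x ∈ Finset.univ.filter (fun x : Fin m => f x.succ = some i.succ),
            ∑ y ∈ Finset.univ.filter (fun y : Fin m => f y.succ = some j.succ),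
              CT k N m x y α) ∧
      (∀ i : Fin n,
        φ (CT0 k N n i) =
          (∑ j ∈ Finset.univ.filter (fun j : Fin m => f j.succ = some i.succ),
            CT0 k N m j) +
          (∑ j ∈ Finset.univ.filter (fun j : Fin m => f j.succ = some i.succ),
            ∑ l ∈ (Finset.univ.filter (fun l : Fin m => f l.succ = some i.succ)).filter
              (fun l => j < l),
              ∑ γ : ZMod N, CT k N m j l γ) +
          (∑ j ∈ Finset.univ.filter (fun j : Fin m => f j.succ = some 0),
            ∑ l ∈ Finset.univ.filter (fun l : Fin m => f l.succ = some i.succ),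
              ∑ γ : ZMod N, CT k N m j l γ)) :=
  cyclotomic_insertion_coproduct' k N n m f hf
end
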